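/- arXiv:1410.3533 — 4 statements merged into one kernel-verified Lean document; each statement's English description precedes it below -/
import Mathlib

section
/- Let (Y_t) be a stochastic process adapted to a filtration (Ω_t), where Ω_t is generated by Y_{t-1}, Y_{t-2}, .... Suppose for each t the conditional distribution function F_t(·|Ω_t) of Y_t given Ω_t is continuous and strictly increasing. Then the random variables U_t = F_t(Y_t|Ω_t) are independent and each uniformly distributed on [0,1]. -/
open MeasureTheory ProbabilityTheory Set Filter Topology

section CPIT

lemma cpit_aux_comp {Ω' : Type*} [mΩ' : MeasurableSpace Ω'] {Ω : Type*}
    (mt : MeasurableSpace Ω) (Ft : ℝ → Ω → ℝ)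
    (hFm : ∀ y, Measurable[mt] (Ft y)) (hc : ∀ ω, Continuous fun y => Ft y ω)
    {g : Ω' → ℝ} {e : Ω' → Ω} (hg : Measurable g) (he : @Measurable Ω' Ω _ mt e) :
    Measurable fun ω' => Ft (g ω') (e ω') := by
  letI := mt
  exact ((stronglyMeasurable_uncurry_of_continuous_of_stronglyMeasurable hc
    (fun y => (hFm y).stronglyMeasurable)).measurable).comp (hg.prodMk he)

variable {Ω : Type*} {m : MeasurableSpace Ω} (P : Measure Ω) [IsProbabilityMeasure P]
    (ℱ : Filtration ℕ m) (Y : ℕ → Ω → ℝ) (F : ℕ → ℝ → Ω → ℝ)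

lemma cpit_measFg (hFmeas : ∀ t y, Measurable[ℱ t] (F t y))
    (hcont : ∀ t ω, Continuous fun y => F t y ω) (t : ℕ)
    {mΩ' : MeasurableSpace Ω} (hle : ℱ t ≤ mΩ') {g : Ω → ℝ} (hg : Measurable[mΩ'] g) :
    Measurable[mΩ'] fun ω => F t (g ω) ω :=
  @cpit_aux_comp Ω mΩ' Ω (ℱ t) (F t) (hFmeas t) (hcont t) g id hg (measurable_id'' hle)


/-- The set where `F t · ω` takes values in `[0,1]` at all rationals. -/
def cpitG0 {Ω : Type*} (F : ℕ → ℝ → Ω → ℝ) (t : ℕ) : Set Ω :=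
  {ω | ∀ q : ℚ, F t (q : ℝ) ω ∈ Icc (0:ℝ) 1}

lemma cpitG0_meas (hFmeas : ∀ t y, Measurable[ℱ t] (F t y)) (t : ℕ) :
    MeasurableSet[ℱ t] (cpitG0 F t) := by
  have : cpitG0 F t = ⋂ q : ℚ, (F t (q:ℝ)) ⁻¹' (Icc (0:ℝ) 1) := by
    ext ω; simp [cpitG0]
  rw [this]
  exact MeasurableSet.iInter fun q => (hFmeas t (q:ℝ)) measurableSet_Icc

lemma cpit_ae_bound (hadapt : ∀ t, Measurable[ℱ (t + 1)] (Y t))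
    (hccdf : ∀ t y, P[Set.indicator {ω | Y t ω ≤ y} (fun _ => (1 : ℝ)) | ℱ t] =ᵐ[P] F t y)
    (t : ℕ) (y : ℝ) : ∀ᵐ ω ∂P, F t y ω ∈ Icc (0:ℝ) 1 := by
  have h0 : (0:Ω → ℝ) ≤ᵐ[P] P[Set.indicator {ω | Y t ω ≤ y} (fun _ => (1 : ℝ)) | ℱ t] :=
    condExp_nonneg (Filter.Eventually.of_forall fun ω =>
      Set.indicator_nonneg (fun _ _ => zero_le_one) ω)
  have hYm : MeasurableSet {ω | Y t ω ≤ y} :=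
    measurableSet_le ((hadapt t).mono (ℱ.le (t+1)) le_rfl) measurable_const
  have hind : Integrable (Set.indicator {ω | Y t ω ≤ y} (fun _ => (1:ℝ))) P :=
    (integrable_const (1:ℝ)).indicator hYm
  have h1 : P[Set.indicator {ω | Y t ω ≤ y} (fun _ => (1 : ℝ)) | ℱ t]
      ≤ᵐ[P] P[(fun _ => (1:ℝ)) | ℱ t] :=
    condExp_mono hind (integrable_const 1)
      (Filter.Eventually.of_forall fun ω => Set.indicator_le_self' (fun _ _ => zero_le_one) ω)
  have hc : P[(fun _ => (1:ℝ)) | ℱ t] = fun _ => (1:ℝ) := condExp_const (ℱ.le t) 1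
  rw [hc] at h1
  filter_upwards [h0, h1, hccdf t y] with ω h0 h1 hF
  rw [← hF]
  exact ⟨h0, h1⟩

lemma cpitG0_ae (hadapt : ∀ t, Measurable[ℱ (t + 1)] (Y t))
    (hccdf : ∀ t y, P[Set.indicator {ω | Y t ω ≤ y} (fun _ => (1 : ℝ)) | ℱ t] =ᵐ[P] F t y)
    (t : ℕ) : ∀ᵐ ω ∂P, ω ∈ cpitG0 F t := by
  simp only [cpitG0, mem_setOf_eq]
  rw [ae_all_iff]
  exact fun q => cpit_ae_bound P ℱ Y F hadapt hccdf t (q:ℝ)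

lemma cpitG0_bound (hmono : ∀ t ω, StrictMono fun y => F t y ω) {t : ℕ} {ω : Ω}
    (hω : ω ∈ cpitG0 F t) (y : ℝ) : F t y ω ∈ Icc (0:ℝ) 1 := by
  obtain ⟨q1, hq1⟩ := exists_rat_lt y
  obtain ⟨q2, hq2⟩ := exists_rat_gt y
  exact ⟨le_trans (hω q1).1 ((hmono t ω).le_iff_le.2 hq1.le),
    le_trans ((hmono t ω).le_iff_le.2 hq2.le) (hω q2).2⟩


lemma cpit_integrableFg (hadapt : ∀ t, Measurable[ℱ (t + 1)] (Y t))
    (hFmeas : ∀ t y, Measurable[ℱ t] (F t y))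
    (hcont : ∀ t ω, Continuous fun y => F t y ω)
    (hmono : ∀ t ω, StrictMono fun y => F t y ω)
    (hccdf : ∀ t y, P[Set.indicator {ω | Y t ω ≤ y} (fun _ => (1 : ℝ)) | ℱ t] =ᵐ[P] F t y)
    (t : ℕ) {g : Ω → ℝ} (hg : Measurable[ℱ t] g) :
    Integrable (fun ω => F t (g ω) ω) P := by
  have hmeas : Measurable[m] fun ω => F t (g ω) ω :=
    cpit_measFg ℱ F hFmeas hcont t (ℱ.le t) (hg.mono (ℱ.le t) le_rfl)
  refine Integrable.mono' (integrable_const (1:ℝ)) hmeas.aestronglyMeasurable ?_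
  filter_upwards [cpitG0_ae P ℱ Y F hadapt hccdf t] with ω hω
  have := cpitG0_bound F hmono hω (g ω)
  rw [Real.norm_eq_abs, abs_le]
  exact ⟨by linarith [this.1], this.2⟩

lemma cpit_setIntegral_const
    (hadapt : ∀ t, Measurable[ℱ (t + 1)] (Y t))
    (hccdf : ∀ t y, P[Set.indicator {ω | Y t ω ≤ y} (fun _ => (1 : ℝ)) | ℱ t] =ᵐ[P] F t y)
    (t : ℕ) (c : ℝ) {A : Set Ω} (hA : MeasurableSet[ℱ t] A) :
    ∫ ω in A, F t c ω ∂P = ∫ ω in A, ({ω | Y t ω ≤ c}.indicator (fun _ => (1:ℝ))) ω ∂P := by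
  have hYm : MeasurableSet {ω | Y t ω ≤ c} :=
    measurableSet_le ((hadapt t).mono (ℱ.le (t+1)) le_rfl) measurable_const
  have hind : Integrable ({ω | Y t ω ≤ c}.indicator (fun _ => (1:ℝ))) P :=
    (integrable_const (1:ℝ)).indicator hYm
  rw [← setIntegral_condExp (ℱ.le t) hind hA]
  refine setIntegral_congr_ae ((ℱ.le t) _ hA) ?_
  filter_upwards [hccdf t c] with ω h _
  exact h.symm

lemma cpit_setIntegral
    (hadapt : ∀ t, Measurable[ℱ (t + 1)] (Y t))
    (hFmeas : ∀ t y, Measurable[ℱ t] (F t y))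
    (hcont : ∀ t ω, Continuous fun y => F t y ω)
    (hmono : ∀ t ω, StrictMono fun y => F t y ω)
    (hccdf : ∀ t y, P[Set.indicator {ω | Y t ω ≤ y} (fun _ => (1 : ℝ)) | ℱ t] =ᵐ[P] F t y)
    (t : ℕ) {g : Ω → ℝ} (hg : Measurable[ℱ t] g) {s : Set Ω} (hs : MeasurableSet[ℱ t] s) :
    ∫ ω in s, F t (g ω) ω ∂P
      = ∫ ω in s, ({ω | Y t ω ≤ g ω}.indicator (fun _ => (1:ℝ))) ω ∂P := by
  have hYmm : Measurable[m] (Y t) := (hadapt t).mono (ℱ.le (t+1)) le_rfl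
  have hgm : Measurable[m] g := hg.mono (ℱ.le t) le_rfl
  -- dyadic approximations
  set gn : ℕ → Ω → ℝ := fun n ω => ((⌈g ω * 2^n⌉ : ℤ) : ℝ) / 2^n with hgn_def
  have h2pos : ∀ n : ℕ, (0:ℝ) < 2^n := fun n => by positivity
  have hceil : ∀ n : ℕ, Measurable fun x : ℝ => ⌈x * 2^n⌉ := fun n =>
    (measurable_id.mul measurable_const).ceil
  have hgn_meas : ∀ n, Measurable[ℱ t] (gn n) := by
    intro n
    have houter : Measurable fun x : ℝ => ((⌈x * 2^n⌉ : ℤ) : ℝ) / 2^n :=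
      (measurable_from_top (f := fun k : ℤ => ((k : ℝ) / 2^n))).comp (hceil n)
    exact houter.comp hg
  have hgn_ge : ∀ n ω, g ω ≤ gn n ω := by
    intro n ω
    rw [le_div_iff₀ (h2pos n)]
    exact Int.le_ceil _
  have hgn_le : ∀ n ω, gn n ω ≤ g ω + ((2:ℝ)^n)⁻¹ := by
    intro n ω
    rw [div_le_iff₀ (h2pos n), add_mul, inv_mul_cancel₀ (h2pos n).ne']
    exact (Int.ceil_lt_add_one _).le
  have htendg : ∀ ω, Tendsto (fun n => gn n ω) atTop (𝓝 (g ω)) := by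
    intro ω
    have h1 : Tendsto (fun n : ℕ => g ω + ((2:ℝ)^n)⁻¹) atTop (𝓝 (g ω + 0)) :=
      tendsto_const_nhds.add
        (tendsto_inv_atTop_zero.comp (tendsto_pow_atTop_atTop_of_one_lt one_lt_two))
    rw [add_zero] at h1
    exact tendsto_of_tendsto_of_tendsto_of_le_of_le tendsto_const_nhds h1
      (fun n => hgn_ge n ω) (fun n => hgn_le n ω)
  -- the identity for each dyadic approximation
  have hstep : ∀ n, ∫ ω in s, F t (gn n ω) ω ∂P
      = ∫ ω in s, ({ω | Y t ω ≤ gn n ω}.indicator (fun _ => (1:ℝ))) ω ∂P := by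
    intro n
    set A : ℤ → Set Ω := fun k => s ∩ {ω | ⌈g ω * 2^n⌉ = k} with hA_def
    have hAmeas : ∀ k, MeasurableSet[ℱ t] (A k) := fun k =>
      hs.inter (hg ((hceil n) (measurableSet_singleton k)))
    have hAmeas' : ∀ k, MeasurableSet[m] (A k) := fun k => (ℱ.le t) _ (hAmeas k)
    have hdisj : Pairwise (Function.onFun Disjoint A) := by
      intro i j hij
      refine Set.disjoint_left.2 fun ω hi hj => hij ?_
      rw [← hi.2, ← hj.2]
    have hunion : ⋃ k, A k = s := by
      ext ω
      simp only [mem_iUnion, hA_def, mem_inter_iff, mem_setOf_eq]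
      exact ⟨fun ⟨k, hk⟩ => hk.1, fun h => ⟨⌈g ω * 2^n⌉, h, rfl⟩⟩
    have hgn_on : ∀ k, ∀ ω ∈ A k, gn n ω = (k : ℝ) / 2^n := by
      intro k ω hω
      simp only [hgn_def]
      rw [hω.2]
    have hintF : IntegrableOn (fun ω => F t (gn n ω) ω) (⋃ k, A k) P :=
      (cpit_integrableFg P ℱ Y F hadapt hFmeas hcont hmono hccdf t (hgn_meas n)).integrableOn
    have hYgn_meas : MeasurableSet {ω | Y t ω ≤ gn n ω} :=
      measurableSet_le hYmm ((hgn_meas n).mono (ℱ.le t) le_rfl)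
    have hintI : IntegrableOn (fun ω => ({ω | Y t ω ≤ gn n ω}.indicator (fun _ => (1:ℝ))) ω)
        (⋃ k, A k) P := ((integrable_const (1:ℝ)).indicator hYgn_meas).integrableOn
    calc ∫ ω in s, F t (gn n ω) ω ∂P = ∫ ω in ⋃ k, A k, F t (gn n ω) ω ∂P := by rw [hunion]
      _ = ∑' k, ∫ ω in A k, F t (gn n ω) ω ∂P :=
        integral_iUnion hAmeas' hdisj hintF
      _ = ∑' k, ∫ ω in A k, ({ω | Y t ω ≤ gn n ω}.indicator (fun _ => (1:ℝ))) ω ∂P := by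
        refine tsum_congr fun k => ?_
        calc ∫ ω in A k, F t (gn n ω) ω ∂P = ∫ ω in A k, F t ((k:ℝ)/2^n) ω ∂P :=
            setIntegral_congr_fun (hAmeas' k) (fun ω hω => by rw [hgn_on k ω hω])
          _ = ∫ ω in A k, ({ω | Y t ω ≤ (k:ℝ)/2^n}.indicator (fun _ => (1:ℝ))) ω ∂P :=
            cpit_setIntegral_const P ℱ Y F hadapt hccdf t _ (hAmeas k)
          _ = ∫ ω in A k, ({ω | Y t ω ≤ gn n ω}.indicator (fun _ => (1:ℝ))) ω ∂P := by
            refine setIntegral_congr_fun (hAmeas' k) (fun ω hω => ?_)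
            simp only [Set.indicator_apply, mem_setOf_eq, hgn_on k ω hω]
      _ = ∫ ω in ⋃ k, A k, ({ω | Y t ω ≤ gn n ω}.indicator (fun _ => (1:ℝ))) ω ∂P :=
        (integral_iUnion hAmeas' hdisj hintI).symm
      _ = ∫ ω in s, ({ω | Y t ω ≤ gn n ω}.indicator (fun _ => (1:ℝ))) ω ∂P := by rw [hunion]
  -- pass to the limit
  have hLHS : Tendsto (fun n => ∫ ω in s, F t (gn n ω) ω ∂P) atTop
      (𝓝 (∫ ω in s, F t (g ω) ω ∂P)) := by
    refine tendsto_integral_of_dominated_convergence (fun _ => (1:ℝ))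
      (fun n => ((cpit_measFg ℱ F hFmeas hcont t (ℱ.le t)
        ((hgn_meas n).mono (ℱ.le t) le_rfl)).aestronglyMeasurable).restrict)
      (integrable_const 1) (fun n => ?_) ?_
    · refine ae_restrict_of_ae ?_
      filter_upwards [cpitG0_ae P ℱ Y F hadapt hccdf t] with ω hω
      have := cpitG0_bound F hmono hω (gn n ω)
      rw [Real.norm_eq_abs, abs_le]
      exact ⟨by linarith [this.1], this.2⟩
    · refine ae_restrict_of_ae (Filter.Eventually.of_forall fun ω => ?_)
      exact ((hcont t ω).tendsto (g ω)).comp (htendg ω)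
  have hRHS : Tendsto (fun n => ∫ ω in s, ({ω | Y t ω ≤ gn n ω}.indicator (fun _ => (1:ℝ))) ω ∂P)
      atTop (𝓝 (∫ ω in s, ({ω | Y t ω ≤ g ω}.indicator (fun _ => (1:ℝ))) ω ∂P)) := by
    refine tendsto_integral_of_dominated_convergence (fun _ => (1:ℝ))
      (fun n => ?_) (integrable_const 1) (fun n => ?_) ?_
    · exact ((measurable_const.indicator
        (measurableSet_le hYmm ((hgn_meas n).mono (ℱ.le t) le_rfl))).aestronglyMeasurable).restrict
    · refine ae_restrict_of_ae (Filter.Eventually.of_forall fun ω => ?_)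
      by_cases hmem : ω ∈ {ω | Y t ω ≤ gn n ω}
      · rw [Set.indicator_of_mem hmem]; simp
      · rw [Set.indicator_of_notMem hmem]; simp
    · refine ae_restrict_of_ae (Filter.Eventually.of_forall fun ω => ?_)
      by_cases hY : Y t ω ≤ g ω
      · have hval : ∀ n, ({ω | Y t ω ≤ gn n ω}.indicator (fun _ => (1:ℝ))) ω = 1 := fun n =>
          Set.indicator_of_mem (show ω ∈ {ω | Y t ω ≤ gn n ω} from le_trans hY (hgn_ge n ω)) _
        rw [Set.indicator_of_mem (show ω ∈ {ω | Y t ω ≤ g ω} from hY)]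
        simp only [hval]
        exact tendsto_const_nhds
      · push_neg at hY
        have hev : ∀ᶠ n in atTop, ({ω | Y t ω ≤ gn n ω}.indicator (fun _ => (1:ℝ))) ω = 0 := by
          filter_upwards [(htendg ω).eventually_lt_const hY] with n hn
          exact Set.indicator_of_notMem (show ω ∉ {ω | Y t ω ≤ gn n ω} from not_le.2 hn) _
        rw [Set.indicator_of_notMem (show ω ∉ {ω | Y t ω ≤ g ω} from not_le.2 hY)]
        exact Tendsto.congr' (hev.mono fun n h => h.symm) tendsto_const_nhds
  exact tendsto_nhds_unique (hLHS.congr hstep) hRHS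


/-- The good set: bounds hold and `F t · ω` tends to `1` at `+∞` and `0` at `-∞`. -/
def cpitG {Ω : Type*} (F : ℕ → ℝ → Ω → ℝ) (t : ℕ) : Set Ω :=
  cpitG0 F t ∩ {ω | Tendsto (fun n : ℕ => F t (n : ℝ) ω) atTop (𝓝 1)}
    ∩ {ω | Tendsto (fun n : ℕ => F t (-(n : ℝ)) ω) atTop (𝓝 0)}

lemma cpitG_meas (hFmeas : ∀ t y, Measurable[ℱ t] (F t y)) (t : ℕ) :
    MeasurableSet[ℱ t] (cpitG F t) :=
  ((cpitG0_meas ℱ F hFmeas t).inter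
    (measurableSet_tendsto (𝓝 (1:ℝ)) (fun n => hFmeas t ((n:ℕ):ℝ)))).inter
      (measurableSet_tendsto (𝓝 (0:ℝ)) (fun n => hFmeas t (-((n:ℕ):ℝ))))

lemma cpit_integral_eq (hadapt : ∀ t, Measurable[ℱ (t + 1)] (Y t))
    (hccdf : ∀ t y, P[Set.indicator {ω | Y t ω ≤ y} (fun _ => (1 : ℝ)) | ℱ t] =ᵐ[P] F t y)
    (t : ℕ) (y : ℝ) : ∫ ω, F t y ω ∂P = (P {ω | Y t ω ≤ y}).toReal := by
  have h := cpit_setIntegral_const P ℱ Y F hadapt hccdf t y (MeasurableSet.univ)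
  rw [setIntegral_univ, setIntegral_univ] at h
  rw [h, integral_indicator_const (1:ℝ)
    (measurableSet_le ((hadapt t).mono (ℱ.le (t+1)) le_rfl) measurable_const)]
  simp
  rfl

lemma cpitG_ae (hadapt : ∀ t, Measurable[ℱ (t + 1)] (Y t))
    (hFmeas : ∀ t y, Measurable[ℱ t] (F t y))
    (hmono : ∀ t ω, StrictMono fun y => F t y ω)
    (hccdf : ∀ t y, P[Set.indicator {ω | Y t ω ≤ y} (fun _ => (1 : ℝ)) | ℱ t] =ᵐ[P] F t y)
    (t : ℕ) : ∀ᵐ ω ∂P, ω ∈ cpitG F t := by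
  have hYmm : Measurable[m] (Y t) := (hadapt t).mono (ℱ.le (t+1)) le_rfl
  have hint : ∀ y : ℝ, Integrable (F t y) P := by
    intro y
    refine Integrable.mono' (integrable_const (1:ℝ))
      ((hFmeas t y).mono (ℱ.le t) le_rfl).aestronglyMeasurable ?_
    filter_upwards [cpit_ae_bound P ℱ Y F hadapt hccdf t y] with ω hω
    rw [Real.norm_eq_abs, abs_le]
    exact ⟨by linarith [hω.1], hω.2⟩
  -- upper limit
  have htop : ∀ᵐ ω ∂P, ω ∈ cpitG0 F t →
      Tendsto (fun n : ℕ => F t (n : ℝ) ω) atTop (𝓝 1) := by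
    set L : Ω → ℝ := fun ω => ⨆ n : ℕ, F t (n : ℝ) ω with hL_def
    have hmonoseq : ∀ ω, Monotone fun n : ℕ => F t (n : ℝ) ω := fun ω a b hab =>
      ((hmono t ω).le_iff_le).2 (by exact_mod_cast hab)
    have hbdd : ∀ ω ∈ cpitG0 F t, BddAbove (range fun n : ℕ => F t (n : ℝ) ω) := by
      intro ω hω
      exact ⟨1, fun x ⟨n, hn⟩ => hn ▸ (cpitG0_bound F hmono hω (n:ℝ)).2⟩
    have htendL : ∀ ω ∈ cpitG0 F t,
        Tendsto (fun n : ℕ => F t (n : ℝ) ω) atTop (𝓝 (L ω)) := fun ω hω =>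
      tendsto_atTop_ciSup (hmonoseq ω) (hbdd ω hω)
    have hLmeas : Measurable[m] L :=
      Measurable.iSup fun n => (hFmeas t (n:ℝ)).mono (ℱ.le t) le_rfl
    have hLbound : ∀ᵐ ω ∂P, ω ∈ cpitG0 F t ∧ L ω ∈ Icc (0:ℝ) 1 := by
      filter_upwards [cpitG0_ae P ℱ Y F hadapt hccdf t] with ω hω
      refine ⟨hω, ?_, ciSup_le fun n => (cpitG0_bound F hmono hω (n:ℝ)).2⟩
      exact le_trans (cpitG0_bound F hmono hω (0:ℝ)).1
        (by simpa using le_ciSup (hbdd ω hω) 0)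
    have hLint : Integrable L P := by
      refine Integrable.mono' (integrable_const (1:ℝ)) hLmeas.aestronglyMeasurable ?_
      filter_upwards [hLbound] with ω hω
      rw [Real.norm_eq_abs, abs_le]
      exact ⟨by linarith [hω.2.1], hω.2.2⟩
    have htendInt : Tendsto (fun n : ℕ => ∫ ω, F t ((n:ℕ):ℝ) ω ∂P) atTop (𝓝 (∫ ω, L ω ∂P)) := by
      refine tendsto_integral_of_dominated_convergence (fun _ => (1:ℝ))
        (fun n => (hint (n:ℝ)).aestronglyMeasurable) (integrable_const 1) (fun n => ?_) ?_
      · filter_upwards [cpit_ae_bound P ℱ Y F hadapt hccdf t (n:ℝ)] with ω hω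
        rw [Real.norm_eq_abs, abs_le]
        exact ⟨by linarith [hω.1], hω.2⟩
      · filter_upwards [cpitG0_ae P ℱ Y F hadapt hccdf t] with ω hω
        exact htendL ω hω
    have htendP : Tendsto (fun n : ℕ => (P {ω | Y t ω ≤ (n:ℝ)}).toReal) atTop (𝓝 1) := by
      have hmonoS : Monotone fun n : ℕ => {ω | Y t ω ≤ (n:ℝ)} := by
        intro a b hab ω hω
        simp only [mem_setOf_eq] at hω ⊢
        exact le_trans hω (by exact_mod_cast hab)
      have hU : ⋃ n : ℕ, {ω | Y t ω ≤ (n:ℝ)} = univ := by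
        refine eq_univ_of_forall fun ω => mem_iUnion.2 ?_
        obtain ⟨n, hn⟩ := exists_nat_ge (Y t ω)
        exact ⟨n, hn⟩
      have h1 := tendsto_measure_iUnion_atTop (μ := P) hmonoS
      rw [hU, measure_univ] at h1
      have h2 := (ENNReal.tendsto_toReal (a := 1) ENNReal.one_ne_top).comp h1
      exact h2
    have hIL : ∫ ω, L ω ∂P = 1 := by
      refine tendsto_nhds_unique ?_ htendP
      refine htendInt.congr fun n => ?_
      exact cpit_integral_eq P ℱ Y F hadapt hccdf t (n:ℝ)
    have hnonneg : 0 ≤ᵐ[P] fun ω => 1 - L ω := by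
      filter_upwards [hLbound] with ω hω
      simp only [Pi.zero_apply]
      linarith [hω.2.2]
    have hzero : (fun ω => 1 - L ω) =ᵐ[P] 0 := by
      refine (integral_eq_zero_iff_of_nonneg_ae hnonneg ((integrable_const 1).sub hLint)).1 ?_
      rw [integral_sub (integrable_const 1) hLint, hIL]
      simp
    filter_upwards [hzero] with ω hω hG0
    have : L ω = 1 := by
      have := hω
      simp only [Pi.zero_apply] at this
      linarith
    exact this ▸ htendL ω hG0
  -- lower limit
  have hbot : ∀ᵐ ω ∂P, ω ∈ cpitG0 F t →
      Tendsto (fun n : ℕ => F t (-(n : ℝ)) ω) atTop (𝓝 0) := by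
    set L : Ω → ℝ := fun ω => ⨅ n : ℕ, F t (-(n : ℝ)) ω with hL_def
    have hantiseq : ∀ ω, Antitone fun n : ℕ => F t (-(n : ℝ)) ω := fun ω a b hab =>
      ((hmono t ω).le_iff_le).2 (by simp; exact_mod_cast hab)
    have hbdd : ∀ ω ∈ cpitG0 F t, BddBelow (range fun n : ℕ => F t (-(n : ℝ)) ω) := by
      intro ω hω
      exact ⟨0, fun x ⟨n, hn⟩ => hn ▸ (cpitG0_bound F hmono hω _).1⟩
    have htendL : ∀ ω ∈ cpitG0 F t,
        Tendsto (fun n : ℕ => F t (-(n : ℝ)) ω) atTop (𝓝 (L ω)) := fun ω hω =>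
      tendsto_atTop_ciInf (hantiseq ω) (hbdd ω hω)
    have hLmeas : Measurable[m] L :=
      Measurable.iInf fun n => (hFmeas t (-(n:ℝ))).mono (ℱ.le t) le_rfl
    have hLbound : ∀ᵐ ω ∂P, ω ∈ cpitG0 F t ∧ L ω ∈ Icc (0:ℝ) 1 := by
      filter_upwards [cpitG0_ae P ℱ Y F hadapt hccdf t] with ω hω
      refine ⟨hω, le_ciInf fun n => (cpitG0_bound F hmono hω _).1, ?_⟩
      exact le_trans (by simpa using ciInf_le (hbdd ω hω) 0)
        (cpitG0_bound F hmono hω (-(0:ℝ))).2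
    have hLint : Integrable L P := by
      refine Integrable.mono' (integrable_const (1:ℝ)) hLmeas.aestronglyMeasurable ?_
      filter_upwards [hLbound] with ω hω
      rw [Real.norm_eq_abs, abs_le]
      exact ⟨by linarith [hω.2.1], hω.2.2⟩
    have htendInt : Tendsto (fun n : ℕ => ∫ ω, F t (-((n:ℕ):ℝ)) ω ∂P) atTop
        (𝓝 (∫ ω, L ω ∂P)) := by
      refine tendsto_integral_of_dominated_convergence (fun _ => (1:ℝ))
        (fun n => (hint (-(n:ℝ))).aestronglyMeasurable) (integrable_const 1) (fun n => ?_) ?_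
      · filter_upwards [cpit_ae_bound P ℱ Y F hadapt hccdf t (-(n:ℝ))] with ω hω
        rw [Real.norm_eq_abs, abs_le]
        exact ⟨by linarith [hω.1], hω.2⟩
      · filter_upwards [cpitG0_ae P ℱ Y F hadapt hccdf t] with ω hω
        exact htendL ω hω
    have htendP : Tendsto (fun n : ℕ => (P {ω | Y t ω ≤ -(n:ℝ)}).toReal) atTop (𝓝 0) := by
      have hantiS : Antitone fun n : ℕ => {ω | Y t ω ≤ -(n:ℝ)} := by
        intro a b hab ω hω
        simp only [mem_setOf_eq] at hω ⊢
        refine le_trans hω (by simp; exact_mod_cast hab)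
      have hI : ⋂ n : ℕ, {ω | Y t ω ≤ -(n:ℝ)} = (∅ : Set Ω) := by
        refine eq_empty_iff_forall_notMem.2 fun ω hω => ?_
        obtain ⟨n, hn⟩ := exists_nat_gt (-(Y t ω))
        have := mem_iInter.1 hω n
        simp only [mem_setOf_eq] at this
        linarith
      have h1 := tendsto_measure_iInter_atTop (μ := P)
        (fun n => ((measurableSet_le hYmm measurable_const).nullMeasurableSet)) hantiS
        ⟨0, measure_ne_top _ _⟩
      rw [hI, measure_empty] at h1
      have h2 := (ENNReal.tendsto_toReal (a := 0) (by simp)).comp h1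
      exact h2
    have hIL : ∫ ω, L ω ∂P = 0 := by
      refine tendsto_nhds_unique ?_ htendP
      refine htendInt.congr fun n => ?_
      exact cpit_integral_eq P ℱ Y F hadapt hccdf t (-(n:ℝ))
    have hnonneg : 0 ≤ᵐ[P] L := by
      filter_upwards [hLbound] with ω hω
      simp only [Pi.zero_apply]
      exact hω.2.1
    have hzero : L =ᵐ[P] 0 :=
      (integral_eq_zero_iff_of_nonneg_ae hnonneg hLint).1 hIL
    filter_upwards [hzero] with ω hω hG0
    have hL0 : L ω = 0 := by simpa using hω
    exact hL0 ▸ htendL ω hG0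
  filter_upwards [cpitG0_ae P ℱ Y F hadapt hccdf t, htop, hbot] with ω h0 h1 h2
  exact ⟨⟨h0, h1 h0⟩, h2 h0⟩


lemma cpitG_surj (hcont : ∀ t ω, Continuous fun y => F t y ω)
    (hmono : ∀ t ω, StrictMono fun y => F t y ω) {t : ℕ} {ω : Ω} {u : ℝ}
    (hω : ω ∈ cpitG F t) (hu : u ∈ Ioo (0:ℝ) 1) : ∃ y, F t y ω = u := by
  obtain ⟨⟨_, h1⟩, h2⟩ := hω
  obtain ⟨n, hn⟩ := (h1.eventually_const_lt hu.2).exists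
  obtain ⟨mm, hm⟩ := (h2.eventually_lt_const hu.1).exists
  have hab : -(mm:ℝ) ≤ (n:ℝ) := le_of_lt (((hmono t ω).lt_iff_lt).1 (hm.trans hn))
  have hmem : u ∈ Icc (F t (-(mm:ℝ)) ω) (F t (n:ℝ) ω) := ⟨hm.le, hn.le⟩
  obtain ⟨y, _, hy⟩ := intermediate_value_Icc hab ((hcont t ω).continuousOn) hmem
  exact ⟨y, hy⟩

lemma cpitG_valIoo (hmono : ∀ t ω, StrictMono fun y => F t y ω) {t : ℕ} {ω : Ω}
    (hω : ω ∈ cpitG0 F t) (x : ℝ) : F t x ω ∈ Ioo (0:ℝ) 1 :=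
  ⟨lt_of_le_of_lt (cpitG0_bound F hmono hω (x - 1)).1 ((hmono t ω) (by linarith)),
   lt_of_lt_of_le ((hmono t ω) (by linarith : x < x + 1)) (cpitG0_bound F hmono hω (x + 1)).2⟩

open scoped Classical in
/-- Generalized inverse of `F t · ω` at level `u`, on the good set. -/
noncomputable def cpitInv {Ω : Type*} (F : ℕ → ℝ → Ω → ℝ) (t : ℕ) (u : ℝ) : Ω → ℝ :=
  fun ω => if ω ∈ cpitG F t then sInf {y | u ≤ F t y ω} else 0

lemma cpitInv_spec (hcont : ∀ t ω, Continuous fun y => F t y ω)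
    (hmono : ∀ t ω, StrictMono fun y => F t y ω) {t : ℕ} {u : ℝ} {ω : Ω}
    (hω : ω ∈ cpitG F t) (hu : u ∈ Ioo (0:ℝ) 1) :
    F t (cpitInv F t u ω) ω = u := by
  obtain ⟨y₀, hy₀⟩ := cpitG_surj F hcont hmono hω hu
  have hset : {y | u ≤ F t y ω} = Ici y₀ := by
    ext y
    simp only [mem_setOf_eq, mem_Ici, ← hy₀]
    exact (hmono t ω).le_iff_le
  classical
  rw [cpitInv, if_pos hω, hset, csInf_Ici, hy₀]

lemma cpitInv_meas (hFmeas : ∀ t y, Measurable[ℱ t] (F t y))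
    (hcont : ∀ t ω, Continuous fun y => F t y ω)
    (hmono : ∀ t ω, StrictMono fun y => F t y ω) (t : ℕ) {u : ℝ} (hu : u ∈ Ioo (0:ℝ) 1) :
    Measurable[ℱ t] (cpitInv F t u) := by
  have hG : MeasurableSet[ℱ t] (cpitG F t) := cpitG_meas ℱ F hFmeas t
  refine measurable_of_Iic (mδ := ℱ t) fun c => ?_
  have hset : cpitInv F t u ⁻¹' Iic c =
      (cpitG F t ∩ ⋂ q : ℚ, {ω | c < (q:ℝ) → u ≤ F t (q:ℝ) ω})
        ∪ ((cpitG F t)ᶜ ∩ {_ω : Ω | (0:ℝ) ≤ c}) := by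
    ext ω
    simp only [mem_preimage, mem_Iic, mem_union, mem_inter_iff, mem_iInter, mem_setOf_eq,
      mem_compl_iff]
    by_cases hω : ω ∈ cpitG F t
    · obtain ⟨y₀, hy₀⟩ := cpitG_surj F hcont hmono hω hu
      have hset0 : {y | u ≤ F t y ω} = Ici y₀ := by
        ext y
        simp only [mem_setOf_eq, mem_Ici, ← hy₀]
        exact (hmono t ω).le_iff_le
      have hval : cpitInv F t u ω = y₀ := by
        classical rw [cpitInv, if_pos hω, hset0, csInf_Ici]
      rw [hval]
      constructor
      · intro hy
        refine Or.inl ⟨hω, fun q hq => ?_⟩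
        rw [← hy₀]
        exact ((hmono t ω).le_iff_le).2 (le_of_lt (lt_of_le_of_lt hy hq))
      · rintro (⟨_, hq⟩ | ⟨hG', _⟩)
        · by_contra hc
          push_neg at hc
          obtain ⟨q, hq1, hq2⟩ := exists_rat_btwn hc
          have h2 := hq q hq1
          rw [← hy₀] at h2
          exact absurd (((hmono t ω).le_iff_le).1 h2) (not_le.2 hq2)
        · exact absurd hω hG'
    · have hval : cpitInv F t u ω = 0 := by rw [cpitInv, if_neg hω]
      rw [hval]
      constructor
      · intro h
        exact Or.inr ⟨hω, h⟩
      · rintro (⟨hG', _⟩ | ⟨_, h⟩)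
        · exact absurd hG' hω
        · exact h
  rw [show cpitInv F t u ⁻¹' Iic c = _ from hset]
  refine MeasurableSet.union (hG.inter (MeasurableSet.iInter fun q => ?_))
    (hG.compl.inter (MeasurableSet.const _))
  by_cases hq : c < (q:ℝ)
  · have : {ω | c < (q:ℝ) → u ≤ F t (q:ℝ) ω} = (F t (q:ℝ)) ⁻¹' Ici u := by
      ext ω
      simp [hq]
    rw [this]
    exact (hFmeas t (q:ℝ)) measurableSet_Ici
  · have : {ω | c < (q:ℝ) → u ≤ F t (q:ℝ) ω} = univ := by
      ext ω
      simp [hq]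
    rw [this]
    exact MeasurableSet.univ


lemma cpit_key (hadapt : ∀ t, Measurable[ℱ (t + 1)] (Y t))
    (hFmeas : ∀ t y, Measurable[ℱ t] (F t y))
    (hcont : ∀ t ω, Continuous fun y => F t y ω)
    (hmono : ∀ t ω, StrictMono fun y => F t y ω)
    (hccdf : ∀ t y, P[Set.indicator {ω | Y t ω ≤ y} (fun _ => (1 : ℝ)) | ℱ t] =ᵐ[P] F t y)
    (t : ℕ) (u : ℝ) {A : Set Ω} (hA : MeasurableSet[ℱ t] A) :
    P (A ∩ {ω | F t (Y t ω) ω ≤ u}) = ENNReal.ofReal (max 0 (min u 1)) * P A := by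
  have hYmm : Measurable[m] (Y t) := (hadapt t).mono (ℱ.le (t+1)) le_rfl
  have hGae := cpitG_ae P ℱ Y F hadapt hFmeas hmono hccdf t
  rcases lt_or_ge u 0 with hu0 | hu0
  · -- u < 0 : intersection is a.e. empty
    have hempty : (A ∩ {ω | F t (Y t ω) ω ≤ u} : Set Ω) =ᵐ[P] (∅ : Set Ω) := by
      rw [Filter.eventuallyEq_set]
      filter_upwards [hGae] with ω hω
      simp only [mem_inter_iff, mem_setOf_eq, mem_empty_iff_false, iff_false, not_and]
      intro _ hle
      exact absurd hle (not_le.2 (lt_of_lt_of_le hu0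
        (le_of_lt (cpitG_valIoo F hmono hω.1.1 (Y t ω)).1)))
    rw [measure_congr hempty, measure_empty]
    rw [max_eq_left (by simp [min_le_iff]; left; linarith)]
    simp
  rcases le_or_gt 1 u with hu1 | hu1
  · -- 1 ≤ u : intersection is a.e. A
    have hfull : (A ∩ {ω | F t (Y t ω) ω ≤ u} : Set Ω) =ᵐ[P] A := by
      rw [Filter.eventuallyEq_set]
      filter_upwards [hGae] with ω hω
      simp only [mem_inter_iff, mem_setOf_eq, and_iff_left_iff_imp]
      intro _
      exact le_trans (le_of_lt (cpitG_valIoo F hmono hω.1.1 (Y t ω)).2) hu1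
    rw [measure_congr hfull, min_eq_right hu1, max_eq_right zero_le_one]
    simp
  · -- 0 ≤ u < 1
    rcases eq_or_lt_of_le hu0 with hu0' | hu0'
    · -- u = 0
      have hempty : (A ∩ {ω | F t (Y t ω) ω ≤ u} : Set Ω) =ᵐ[P] (∅ : Set Ω) := by
        rw [Filter.eventuallyEq_set]
        filter_upwards [hGae] with ω hω
        simp only [mem_inter_iff, mem_setOf_eq, mem_empty_iff_false, iff_false, not_and]
        intro _ hle
        rw [← hu0'] at hle
        exact absurd hle (not_le.2 (cpitG_valIoo F hmono hω.1.1 (Y t ω)).1)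
      rw [measure_congr hempty, measure_empty, ← hu0']
      simp
    -- now u ∈ Ioo 0 1
    have hu : u ∈ Ioo (0:ℝ) 1 := ⟨hu0', hu1⟩
    set g : Ω → ℝ := cpitInv F t u with hg_def
    have hgmeas : Measurable[ℱ t] g := cpitInv_meas ℱ F hFmeas hcont hmono t hu
    have hseteq : (A ∩ {ω | F t (Y t ω) ω ≤ u} : Set Ω) =ᵐ[P] ((A ∩ {ω | Y t ω ≤ g ω} : Set Ω)) := by
      rw [Filter.eventuallyEq_set]
      filter_upwards [hGae] with ω hω
      simp only [mem_inter_iff, mem_setOf_eq, and_congr_right_iff]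
      intro _
      rw [← cpitInv_spec F hcont hmono hω hu]
      exact (hmono t ω).le_iff_le
    have hIeq : ∫ ω in A, F t (g ω) ω ∂P
        = ∫ ω in A, ({ω | Y t ω ≤ g ω}.indicator (fun _ => (1:ℝ))) ω ∂P :=
      cpit_setIntegral P ℱ Y F hadapt hFmeas hcont hmono hccdf t hgmeas hA
    have hconst : ∫ ω in A, F t (g ω) ω ∂P = u * (P A).toReal := by
      rw [setIntegral_congr_ae ((ℱ.le t) _ hA)
        (by filter_upwards [hGae] with ω hω _
            exact cpitInv_spec F hcont hmono hω hu)]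
      rw [setIntegral_const, smul_eq_mul, mul_comm]
      rfl
    have hindic : ∫ ω in A, ({ω | Y t ω ≤ g ω}.indicator (fun _ => (1:ℝ))) ω ∂P
        = (P (A ∩ {ω | Y t ω ≤ g ω})).toReal := by
      have hYg : MeasurableSet {ω | Y t ω ≤ g ω} :=
        measurableSet_le hYmm (hgmeas.mono (ℱ.le t) le_rfl)
      rw [setIntegral_indicator hYg, setIntegral_const]
      simp
      rfl
    have htoReal : (P (A ∩ {ω | Y t ω ≤ g ω})).toReal = u * (P A).toReal := by
      rw [← hindic, ← hIeq, hconst]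
    rw [measure_congr hseteq]
    have hfin : P (A ∩ {ω | Y t ω ≤ g ω}) ≠ ⊤ := measure_ne_top _ _
    have heq2 : P (A ∩ {ω | Y t ω ≤ g ω}) = ENNReal.ofReal (u * (P A).toReal) := by
      rw [← htoReal, ENNReal.ofReal_toReal hfin]
    rw [heq2, min_eq_left hu1.le, max_eq_right hu0, ENNReal.ofReal_mul hu0,
      ENNReal.ofReal_toReal (measure_ne_top _ _)]

end CPIT

/-- **Conditional probability integral transform.** Let `(Y t)` be a process and `ℱ` a
filtration with `ℱ t` generated by `Y (t-1), Y (t-2), …` (so `Y t` is `ℱ (t+1)`-measurable).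
If for each `t` the conditional distribution function `F t (·) ω` of `Y t` given `ℱ t`
(i.e. `F t y` is a version of `P(Y t ≤ y ∣ ℱ t)`) is continuous and strictly increasing,
then the random variables `U t = F t (Y t) ` are independent and each uniformly
distributed on `[0,1]`. -/
theorem stmt_1 {Ω : Type*} {m : MeasurableSpace Ω} (P : Measure Ω) [IsProbabilityMeasure P]
    (ℱ : Filtration ℕ m) (Y : ℕ → Ω → ℝ) (F : ℕ → ℝ → Ω → ℝ)
    (hgen : ∀ t, ℱ t = MeasurableSpace.comap (fun ω => fun s : {s : ℕ // s < t} => Y s ω)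
      (MeasurableSpace.pi))
    (hadapt : ∀ t, Measurable[ℱ (t + 1)] (Y t))
    (hFmeas : ∀ t y, Measurable[ℱ t] (F t y))
    (hcont : ∀ t ω, Continuous (fun y => F t y ω))
    (hmono : ∀ t ω, StrictMono (fun y => F t y ω))
    (hccdf : ∀ t y, P[Set.indicator {ω | Y t ω ≤ y} (fun _ => (1 : ℝ)) | ℱ t]
      =ᵐ[P] F t y) :
    iIndepFun (fun t ω => F t (Y t ω) ω) P ∧
      ∀ t, P.map (fun ω => F t (Y t ω) ω)
        = (volume : Measure ℝ).restrict (Set.Icc 0 1) := by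
  have hUmeas : ∀ s : ℕ, Measurable[ℱ (s+1)] fun ω => F s (Y s ω) ω := fun s =>
    cpit_measFg ℱ F hFmeas hcont s (ℱ.mono (Nat.le_succ s)) (hadapt s)
  have hUm : ∀ s : ℕ, Measurable[m] fun ω => F s (Y s ω) ω := fun s =>
    (hUmeas s).mono (ℱ.le (s+1)) le_rfl
  have hkey : ∀ (t : ℕ) (u : ℝ) (A : Set Ω), MeasurableSet[ℱ t] A →
      P (A ∩ {ω | F t (Y t ω) ω ≤ u}) = ENNReal.ofReal (max 0 (min u 1)) * P A :=
    fun t u A hA => cpit_key P ℱ Y F hadapt hFmeas hcont hmono hccdf t u hA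
  have hsingle : ∀ (t : ℕ) (u : ℝ),
      P {ω | F t (Y t ω) ω ≤ u} = ENNReal.ofReal (max 0 (min u 1)) := by
    intro t u
    have := hkey t u univ MeasurableSet.univ
    rwa [univ_inter, measure_univ, mul_one] at this
  constructor
  · -- independence
    set π : ℕ → Set (Set Ω) :=
      fun i => preimage (fun ω => F i (Y i ω) ω) '' (range Iic) with hπ
    have hgen' : ∀ i : ℕ, MeasurableSpace.comap (fun ω => F i (Y i ω) ω)
        (inferInstance : MeasurableSpace ℝ) = MeasurableSpace.generateFrom (π i) := by
      intro i
      rw [show (inferInstance : MeasurableSpace ℝ) = borel ℝ from BorelSpace.measurable_eq,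
        borel_eq_generateFrom_Iic ℝ, MeasurableSpace.comap_generateFrom]
    have hpi : ∀ i, IsPiSystem (π i) := by
      intro i
      have h := (isPiSystem_Iic (α := ℝ)).comap (fun ω => F i (Y i ω) ω)
      have heq : {s : Set Ω | ∃ t ∈ range (Iic : ℝ → Set ℝ),
          (fun ω => F i (Y i ω) ω) ⁻¹' t = s} = π i := by
        ext s
        simp [hπ]
      rwa [heq] at h
    have hind : iIndepSets π P := by
      rw [iIndepSets_iff]
      intro s
      induction s using Finset.induction_on_max with
      | empty => intro f _; simp
      | insert a s hlt ih =>
        intro f hf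
        obtain ⟨Ia, ⟨ca, hca⟩, hfa⟩ := hf a (Finset.mem_insert_self a s)
        have hfa' : f a = {ω | F a (Y a ω) ω ≤ ca} := by rw [← hfa, ← hca]; rfl
        have hA : MeasurableSet[ℱ a] (⋂ i ∈ s, f i) := by
          refine MeasurableSet.biInter (Finset.countable_toSet s) fun i hi => ?_
          have hi' : i ∈ s := Finset.mem_coe.1 hi
          obtain ⟨Ii, ⟨ci, hci⟩, hfi⟩ := hf i (Finset.mem_insert_of_mem hi')
          have hfi' : f i = (fun ω => F i (Y i ω) ω) ⁻¹' Iic ci := by rw [← hfi, ← hci]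
          rw [hfi']
          exact (ℱ.mono (Nat.succ_le_of_lt (hlt i hi'))) _ ((hUmeas i) measurableSet_Iic)
        have hnotmem : a ∉ s := fun ha => lt_irrefl a (hlt a ha)
        rw [Finset.set_biInter_insert, Finset.prod_insert hnotmem, Set.inter_comm (f a),
          hfa', hkey a ca _ hA, hsingle a ca,
          ih (fun i hi => hf i (Finset.mem_insert_of_mem hi))]
    rw [iIndepFun_iff_iIndep]
    exact ProbabilityTheory.iIndepSets.iIndep
      (fun i => (hUm i).comap_le) π hpi hgen' hind
  · -- uniform marginals
    intro t
    haveI : IsProbabilityMeasure (P.map (fun ω => F t (Y t ω) ω)) :=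
      Measure.isProbabilityMeasure_map (hUm t).aemeasurable
    refine Measure.ext_of_Iic (P.map (fun ω => F t (Y t ω) ω)) _ fun a => ?_
    rw [Measure.map_apply (hUm t) measurableSet_Iic,
      show (fun ω => F t (Y t ω) ω) ⁻¹' Iic a = {ω | F t (Y t ω) ω ≤ a} from rfl,
      hsingle t a, Measure.restrict_apply measurableSet_Iic]
    rcases lt_or_ge a 0 with ha | ha
    · have hset : Iic a ∩ Icc (0:ℝ) 1 = ∅ := by
        ext x
        simp only [mem_inter_iff, mem_Iic, mem_Icc, mem_empty_iff_false, iff_false, not_and]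
        intro h1 h2 _
        linarith
      rw [hset, measure_empty, min_eq_left (by linarith : a ≤ 1),
        max_eq_left (by linarith : a ≤ 0)]
      simp
    · have hset : Iic a ∩ Icc (0:ℝ) 1 = Icc 0 (min a 1) := by
        ext x
        simp only [mem_inter_iff, mem_Iic, mem_Icc, le_min_iff]
        tauto
      rw [hset, Real.volume_Icc, max_eq_right (le_min ha zero_le_one), sub_zero]
end

section
/- Let U_1,...,U_n be iid uniform on [0,1] and V_{2n}(r₁,r₂) = (n-1)^{-1/2} Σ_{t=2}^n [1{U_t ≤ r₁}1{U_{t-1} ≤ r₂} − r₁r₂]. Then as n → ∞, Cov(V_{2n}(r), V_{2n}(s)) converges to min(r₁,s₁)min(r₂,s₂) + min(r₁,s₂)r₂s₁ + min(r₂,s₁)r₁s₂ − 3r₁r₂s₁s₂ for every r, s ∈ [0,1]². -/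
open MeasureTheory ProbabilityTheory Set Filter

noncomputable def stmt7ind (a x : ℝ) : ℝ := if x ≤ a then 1 else 0

lemma stmt7ind_meas (a : ℝ) : Measurable (stmt7ind a) :=
  Measurable.ite measurableSet_Iic measurable_const measurable_const

lemma stmt7ind_nonneg (a x : ℝ) : 0 ≤ stmt7ind a x := by
  unfold stmt7ind; split_ifs <;> norm_num

lemma stmt7ind_le_one (a x : ℝ) : stmt7ind a x ≤ 1 := by
  unfold stmt7ind; split_ifs <;> norm_num

lemma stmt7ind_abs (a x : ℝ) : |stmt7ind a x| ≤ 1 := by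
  rw [abs_le]; exact ⟨by linarith [stmt7ind_nonneg a x], stmt7ind_le_one a x⟩

lemma stmt7ind_mul (a b x : ℝ) : stmt7ind a x * stmt7ind b x = stmt7ind (min a b) x := by
  unfold stmt7ind; split_ifs with h1 h2 h3 <;> simp_all [le_min_iff] <;> linarith

lemma stmt7_bdd_integrable {Ω : Type*} [MeasurableSpace Ω] (P : Measure Ω)
    [IsProbabilityMeasure P] {f : Ω → ℝ} (hf : Measurable f) (C : ℝ)
    (hC : ∀ ω, |f ω| ≤ C) : Integrable f P :=
  (integrable_const C).mono' hf.aestronglyMeasurable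
    (ae_of_all _ (by simpa [Real.norm_eq_abs] using hC))

lemma stmt7_sum (a b c : ℝ) : ∀ n : ℕ, 2 ≤ n →
    ∑ t ∈ Finset.Icc 2 n, ∑ u ∈ Finset.Icc 2 n,
      (if u = t then a else if u = t + 1 then b else if t = u + 1 then c else 0)
    = a * ((n : ℝ) - 1) + (b + c) * ((n : ℝ) - 2) := by
  intro n hn
  induction n, hn using Nat.le_induction with
  | base => norm_num [Finset.Icc_self]
  | succ n hn ih =>
    have hnm : (n + 1 : ℕ) ∉ Finset.Icc 2 n := by simp
    have hins : Finset.Icc 2 (n + 1) = insert (n + 1) (Finset.Icc 2 n) :=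
      (Finset.insert_Icc_right_eq_Icc_add_one (by omega)).symm
    rw [hins, Finset.sum_insert hnm]
    have h1 : ∑ u ∈ insert (n+1) (Finset.Icc 2 n),
        (if u = n + 1 then a else if u = n + 1 + 1 then b else if n + 1 = u + 1 then c else 0)
        = a + c := by
      rw [Finset.sum_insert hnm]
      rw [if_pos rfl]
      have : ∀ u ∈ Finset.Icc 2 n,
          (if u = n + 1 then a else if u = n + 1 + 1 then b else if n + 1 = u + 1 then c else 0)
          = if u = n then c else 0 := by
        intro u hu
        have := Finset.mem_Icc.mp hu
        split_ifs <;> first | rfl | omega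
      rw [Finset.sum_congr rfl this, Finset.sum_ite_eq' (Finset.Icc 2 n) n fun _ => c,
        if_pos (Finset.mem_Icc.mpr ⟨hn, le_refl n⟩)]
    have h2 : ∀ t ∈ Finset.Icc 2 n, ∑ u ∈ insert (n+1) (Finset.Icc 2 n),
        (if u = t then a else if u = t + 1 then b else if t = u + 1 then c else 0)
        = (if t = n then b else 0) + ∑ u ∈ Finset.Icc 2 n,
          (if u = t then a else if u = t + 1 then b else if t = u + 1 then c else 0) := by
      intro t ht
      have htm := Finset.mem_Icc.mp ht
      rw [Finset.sum_insert hnm]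
      congr 1
      split_ifs <;> first | rfl | omega
    rw [h1, Finset.sum_congr rfl h2, Finset.sum_add_distrib,
      Finset.sum_ite_eq' (Finset.Icc 2 n) n fun _ => b,
      if_pos (Finset.mem_Icc.mpr ⟨hn, le_refl n⟩), ih]
    push_cast
    ring

/-- the centered summand -/
noncomputable def stmt7X {Ω : Type*} (U : ℕ → Ω → ℝ) (r : ℝ × ℝ) (t : ℕ) (ω : Ω) : ℝ :=
  stmt7ind r.1 (U t ω) * stmt7ind r.2 (U (t - 1) ω) - r.1 * r.2

section Main

variable {Ω : Type*} [MeasurableSpace Ω] (P : Measure Ω) [IsProbabilityMeasure P]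
  (U : ℕ → Ω → ℝ) (hmeas : ∀ t, Measurable (U t))
  (hindep : iIndepFun U P)
  (hunif : ∀ t, P.map (U t) = (volume : Measure ℝ).restrict (Set.Icc 0 1))

include hmeas hindep hunif

lemma stmt7_int_ind (t : ℕ) {a : ℝ} (h0 : 0 ≤ a) (h1 : a ≤ 1) :
    ∫ ω, stmt7ind a (U t ω) ∂P = a := by
  rw [← integral_map (hmeas t).aemeasurable (stmt7ind_meas a).aestronglyMeasurable, hunif t]
  have he : ∀ x : ℝ, stmt7ind a x = (Set.Iic a).indicator (fun _ => (1:ℝ)) x := fun x => by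
    simp [stmt7ind, Set.indicator_apply, Set.mem_Iic]
  simp_rw [he]
  rw [MeasureTheory.integral_indicator_const _ measurableSet_Iic,
    measureReal_restrict_apply measurableSet_Iic]
  have : Set.Iic a ∩ Set.Icc 0 1 = Set.Icc 0 a := by
    ext x; simp only [Set.mem_inter_iff, Set.mem_Iic, Set.mem_Icc]
    exact ⟨fun h => ⟨h.2.1, h.1⟩, fun h => ⟨h.2, h.1, h.2.trans h1⟩⟩
  rw [this, Real.volume_real_Icc_of_le h0, sub_zero, smul_eq_mul, mul_one]

lemma stmt7_integrable_ind (t : ℕ) (a : ℝ) :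
    Integrable (fun ω => stmt7ind a (U t ω)) P :=
  stmt7_bdd_integrable P ((stmt7ind_meas a).comp (hmeas t)) 1 fun _ => stmt7ind_abs a _

lemma stmt7_integrable_ind2 (t u : ℕ) (a b : ℝ) :
    Integrable (fun ω => stmt7ind a (U t ω) * stmt7ind b (U u ω)) P := by
  apply stmt7_bdd_integrable P (((stmt7ind_meas a).comp (hmeas t)).mul
    ((stmt7ind_meas b).comp (hmeas u))) 1
  intro ω
  simp only [Pi.mul_apply, Function.comp_apply]
  rw [abs_mul]
  calc |stmt7ind a (U t ω)| * |stmt7ind b (U u ω)| ≤ 1 * 1 :=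
        mul_le_mul (stmt7ind_abs _ _) (stmt7ind_abs _ _) (abs_nonneg _) zero_le_one
    _ = 1 := by norm_num

lemma stmt7_int2 {t u : ℕ} (htu : t ≠ u) {a b : ℝ} (ha0 : 0 ≤ a) (ha1 : a ≤ 1)
    (hb0 : 0 ≤ b) (hb1 : b ≤ 1) :
    ∫ ω, stmt7ind a (U t ω) * stmt7ind b (U u ω) ∂P = a * b := by
  have hI : IndepFun (fun ω => stmt7ind a (U t ω)) (fun ω => stmt7ind b (U u ω)) P :=
    (hindep.indepFun htu).comp (stmt7ind_meas a) (stmt7ind_meas b)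
  have := hI.integral_mul_eq_mul_integral
    (stmt7_integrable_ind P U hmeas hindep hunif t a).aestronglyMeasurable
    (stmt7_integrable_ind P U hmeas hindep hunif u b).aestronglyMeasurable
  rw [show ((fun ω => stmt7ind a (U t ω)) * fun ω => stmt7ind b (U u ω))
      = fun ω => stmt7ind a (U t ω) * stmt7ind b (U u ω) from rfl] at this
  rw [this, stmt7_int_ind P U hmeas hindep hunif t ha0 ha1,
    stmt7_int_ind P U hmeas hindep hunif u hb0 hb1]

lemma stmt7_int3 {t u v : ℕ} (htu : t ≠ u) (htv : t ≠ v) (huv : u ≠ v)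
    {a b c : ℝ} (ha0 : 0 ≤ a) (ha1 : a ≤ 1) (hb0 : 0 ≤ b) (hb1 : b ≤ 1)
    (hc0 : 0 ≤ c) (hc1 : c ≤ 1) :
    ∫ ω, stmt7ind a (U t ω) * stmt7ind b (U u ω) * stmt7ind c (U v ω) ∂P = a * b * c := by
  have hp : IndepFun (fun ω => (U t ω, U u ω)) (U v) P :=
    hindep.indepFun_prodMk hmeas t u v htv huv
  have hI : IndepFun (fun ω => stmt7ind a (U t ω) * stmt7ind b (U u ω))
      (fun ω => stmt7ind c (U v ω)) P :=
    hp.comp (((stmt7ind_meas a).comp measurable_fst).mul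
      ((stmt7ind_meas b).comp measurable_snd)) (stmt7ind_meas c)
  have := hI.integral_mul_eq_mul_integral
    (stmt7_integrable_ind2 P U hmeas hindep hunif t u a b).aestronglyMeasurable
    (stmt7_integrable_ind P U hmeas hindep hunif v c).aestronglyMeasurable
  rw [show ((fun ω => stmt7ind a (U t ω) * stmt7ind b (U u ω)) * fun ω => stmt7ind c (U v ω))
      = fun ω => stmt7ind a (U t ω) * stmt7ind b (U u ω) * stmt7ind c (U v ω) from rfl] at this
  rw [this, stmt7_int2 P U hmeas hindep hunif htu ha0 ha1 hb0 hb1,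
    stmt7_int_ind P U hmeas hindep hunif v hc0 hc1]

variable {r s : ℝ × ℝ}

lemma stmt7X_meas (r : ℝ × ℝ) (t : ℕ) : Measurable (stmt7X U r t) :=
  (((stmt7ind_meas r.1).comp (hmeas t)).mul
    ((stmt7ind_meas r.2).comp (hmeas (t - 1)))).sub measurable_const

lemma stmt7X_abs (hr : r ∈ Set.Icc (0 : ℝ × ℝ) 1) (t : ℕ) (ω : Ω) :
    |stmt7X U r t ω| ≤ 2 := by
  unfold stmt7X
  have h1 : |stmt7ind r.1 (U t ω) * stmt7ind r.2 (U (t - 1) ω)| ≤ 1 := by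
    rw [abs_mul]
    calc |stmt7ind r.1 (U t ω)| * |stmt7ind r.2 (U (t - 1) ω)| ≤ 1 * 1 :=
          mul_le_mul (stmt7ind_abs _ _) (stmt7ind_abs _ _) (abs_nonneg _) zero_le_one
      _ = 1 := by norm_num
  have h2 : |r.1 * r.2| ≤ 1 := by
    rw [abs_mul, abs_of_nonneg hr.1.1, abs_of_nonneg hr.1.2]
    calc r.1 * r.2 ≤ 1 * 1 := mul_le_mul hr.2.1 hr.2.2 hr.1.2 zero_le_one
      _ = 1 := by norm_num
  calc |stmt7ind r.1 (U t ω) * stmt7ind r.2 (U (t - 1) ω) - r.1 * r.2|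
      ≤ |stmt7ind r.1 (U t ω) * stmt7ind r.2 (U (t - 1) ω)| + |r.1 * r.2| := abs_sub _ _
    _ ≤ 2 := by linarith

lemma stmt7X_integrable (hr : r ∈ Set.Icc (0 : ℝ × ℝ) 1) (t : ℕ) :
    Integrable (stmt7X U r t) P :=
  stmt7_bdd_integrable P (stmt7X_meas P U hmeas hindep hunif r t) 2 (stmt7X_abs P U hmeas hindep hunif hr t)

lemma stmt7XY_integrable (hr : r ∈ Set.Icc (0 : ℝ × ℝ) 1) (hs : s ∈ Set.Icc (0 : ℝ × ℝ) 1)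
    (t u : ℕ) : Integrable (fun ω => stmt7X U r t ω * stmt7X U s u ω) P := by
  apply stmt7_bdd_integrable P ((stmt7X_meas P U hmeas hindep hunif r t).mul (stmt7X_meas P U hmeas hindep hunif s u)) 4
  intro ω
  simp only [Pi.mul_apply, Function.comp_apply]
  rw [abs_mul]
  calc |stmt7X U r t ω| * |stmt7X U s u ω| ≤ 2 * 2 :=
        mul_le_mul (stmt7X_abs P U hmeas hindep hunif hr t ω) (stmt7X_abs P U hmeas hindep hunif hs u ω) (abs_nonneg _)
          (by norm_num)
    _ = 4 := by norm_num

lemma stmt7_EX (hr : r ∈ Set.Icc (0 : ℝ × ℝ) 1) {t : ℕ} (ht : 2 ≤ t) :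
    ∫ ω, stmt7X U r t ω ∂P = 0 := by
  unfold stmt7X
  rw [integral_sub (stmt7_integrable_ind2 P U hmeas hindep hunif t (t - 1) r.1 r.2)
    (integrable_const _),
    stmt7_int2 P U hmeas hindep hunif (by omega : t ≠ t - 1) hr.1.1 hr.2.1 hr.1.2 hr.2.2,
    integral_const]
  simp


omit hmeas hindep hunif in
lemma stmt7_combine (f1 f2 f3 : Ω → ℝ) (p q c v1 v2 v3 : ℝ)
    (h1 : Integrable f1 P) (h2 : Integrable f2 P) (h3 : Integrable f3 P)
    (H1 : ∫ ω, f1 ω ∂P = v1) (H2 : ∫ ω, f2 ω ∂P = v2) (H3 : ∫ ω, f3 ω ∂P = v3) :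
    ∫ ω, (f1 ω - p * f2 ω - q * f3 ω + c) ∂P = v1 - p * v2 - q * v3 + c := by
  have hA : Integrable (fun ω => f1 ω - p * f2 ω - q * f3 ω) P :=
    (h1.sub (h2.const_mul p)).sub (h3.const_mul q)
  have e1 : ∫ ω, (f1 ω - p * f2 ω - q * f3 ω + c) ∂P
      = (∫ ω, (f1 ω - p * f2 ω - q * f3 ω) ∂P) + ∫ _ω, c ∂P :=
    integral_add hA (integrable_const c)
  have e2 : ∫ ω, (f1 ω - p * f2 ω - q * f3 ω) ∂P
      = (∫ ω, (f1 ω - p * f2 ω) ∂P) - ∫ ω, q * f3 ω ∂P :=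
    integral_sub (h1.sub (h2.const_mul p)) (h3.const_mul q)
  have e3 : ∫ ω, (f1 ω - p * f2 ω) ∂P = (∫ ω, f1 ω ∂P) - ∫ ω, p * f2 ω ∂P :=
    integral_sub h1 (h2.const_mul p)
  rw [e1, e2, e3, integral_const_mul, integral_const_mul, integral_const, H1, H2, H3]
  simp [measure_univ]

lemma stmt7_EXY (hr : r ∈ Set.Icc (0 : ℝ × ℝ) 1) (hs : s ∈ Set.Icc (0 : ℝ × ℝ) 1)
    {t u : ℕ} (ht : 2 ≤ t) (hu : 2 ≤ u) :
    ∫ ω, stmt7X U r t ω * stmt7X U s u ω ∂P =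
      (if u = t then min r.1 s.1 * min r.2 s.2 - r.1 * r.2 * (s.1 * s.2)
       else if u = t + 1 then min r.1 s.2 * r.2 * s.1 - r.1 * r.2 * (s.1 * s.2)
       else if t = u + 1 then min r.2 s.1 * r.1 * s.2 - r.1 * r.2 * (s.1 * s.2)
       else 0) := by
  obtain ⟨⟨hr10, hr20⟩, ⟨hr11, hr21⟩⟩ := hr
  obtain ⟨⟨hs10, hs20⟩, ⟨hs11, hs21⟩⟩ := hs
  by_cases h1 : u = t
  · subst h1
    rw [if_pos rfl]
    have hpt : ∀ ω, stmt7X U r u ω * stmt7X U s u ω =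
        stmt7ind (min r.1 s.1) (U u ω) * stmt7ind (min r.2 s.2) (U (u - 1) ω)
        - r.1 * r.2 * (stmt7ind s.1 (U u ω) * stmt7ind s.2 (U (u - 1) ω))
        - s.1 * s.2 * (stmt7ind r.1 (U u ω) * stmt7ind r.2 (U (u - 1) ω))
        + r.1 * r.2 * (s.1 * s.2) := by
      intro ω; unfold stmt7X
      rw [← stmt7ind_mul r.1 s.1, ← stmt7ind_mul r.2 s.2]; ring
    simp_rw [hpt]
    refine (stmt7_combine P
      (fun ω => stmt7ind (min r.1 s.1) (U u ω) * stmt7ind (min r.2 s.2) (U (u - 1) ω))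
      (fun ω => stmt7ind s.1 (U u ω) * stmt7ind s.2 (U (u - 1) ω))
      (fun ω => stmt7ind r.1 (U u ω) * stmt7ind r.2 (U (u - 1) ω))
      (r.1 * r.2) (s.1 * s.2) (r.1 * r.2 * (s.1 * s.2)) _ _ _
      (stmt7_integrable_ind2 P U hmeas hindep hunif u (u-1) _ _)
      (stmt7_integrable_ind2 P U hmeas hindep hunif u (u-1) _ _)
      (stmt7_integrable_ind2 P U hmeas hindep hunif u (u-1) _ _)
      (stmt7_int2 P U hmeas hindep hunif (by omega : u ≠ u - 1)
        (le_min hr10 hs10) ((min_le_left _ _).trans hr11)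
        (le_min hr20 hs20) ((min_le_left _ _).trans hr21))
      (stmt7_int2 P U hmeas hindep hunif (by omega : u ≠ u - 1) hs10 hs11 hs20 hs21)
      (stmt7_int2 P U hmeas hindep hunif (by omega : u ≠ u - 1) hr10 hr11 hr20 hr21)).trans
      (by ring)
  · by_cases h2 : u = t + 1
    · subst h2
      rw [if_neg h1, if_pos rfl]
      have hpt : ∀ ω, stmt7X U r t ω * stmt7X U s (t + 1) ω =
          stmt7ind (min r.1 s.2) (U t ω) * stmt7ind r.2 (U (t - 1) ω)
            * stmt7ind s.1 (U (t + 1) ω)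
          - r.1 * r.2 * (stmt7ind s.1 (U (t + 1) ω) * stmt7ind s.2 (U t ω))
          - s.1 * s.2 * (stmt7ind r.1 (U t ω) * stmt7ind r.2 (U (t - 1) ω))
          + r.1 * r.2 * (s.1 * s.2) := by
        intro ω; unfold stmt7X; simp only [Nat.add_sub_cancel]
        rw [← stmt7ind_mul r.1 s.2]; ring
      simp_rw [hpt]
      have hi3 : Integrable (fun ω => stmt7ind (min r.1 s.2) (U t ω)
          * stmt7ind r.2 (U (t - 1) ω) * stmt7ind s.1 (U (t + 1) ω)) P := by
        apply stmt7_bdd_integrable P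
          ((((stmt7ind_meas _).comp (hmeas t)).mul
            ((stmt7ind_meas _).comp (hmeas (t-1)))).mul
            ((stmt7ind_meas _).comp (hmeas (t+1)))) 1
        intro ω
        simp only [Pi.mul_apply, Function.comp_apply]
        rw [abs_mul, abs_mul]
        calc |stmt7ind (min r.1 s.2) (U t ω)| * |stmt7ind r.2 (U (t-1) ω)|
              * |stmt7ind s.1 (U (t+1) ω)| ≤ 1 * 1 * 1 := by
              apply mul_le_mul _ (stmt7ind_abs _ _) (abs_nonneg _) (by norm_num)
              exact mul_le_mul (stmt7ind_abs _ _) (stmt7ind_abs _ _) (abs_nonneg _) zero_le_one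
          _ = 1 := by norm_num
      refine (stmt7_combine P
        (fun ω => stmt7ind (min r.1 s.2) (U t ω) * stmt7ind r.2 (U (t - 1) ω)
        * stmt7ind s.1 (U (t + 1) ω))
        (fun ω => stmt7ind s.1 (U (t + 1) ω) * stmt7ind s.2 (U t ω))
        (fun ω => stmt7ind r.1 (U t ω) * stmt7ind r.2 (U (t - 1) ω))
        (r.1 * r.2) (s.1 * s.2) (r.1 * r.2 * (s.1 * s.2)) _ _ _
        hi3
        (stmt7_integrable_ind2 P U hmeas hindep hunif (t+1) t _ _)
        (stmt7_integrable_ind2 P U hmeas hindep hunif t (t-1) _ _)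
        (stmt7_int3 P U hmeas hindep hunif (by omega : t ≠ t - 1) (by omega : t ≠ t + 1)
        (by omega : t - 1 ≠ t + 1)
        (le_min hr10 hs20) ((min_le_left _ _).trans hr11) hr20 hr21 hs10 hs11)
        (stmt7_int2 P U hmeas hindep hunif (by omega : t + 1 ≠ t) hs10 hs11 hs20 hs21)
        (stmt7_int2 P U hmeas hindep hunif (by omega : t ≠ t - 1) hr10 hr11 hr20 hr21)).trans
        (by ring)
    · by_cases h3 : t = u + 1
      · subst h3
        rw [if_neg h1, if_neg h2, if_pos rfl]
        have hpt : ∀ ω, stmt7X U r (u + 1) ω * stmt7X U s u ω =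
            stmt7ind (min r.2 s.1) (U u ω) * stmt7ind s.2 (U (u - 1) ω)
              * stmt7ind r.1 (U (u + 1) ω)
            - r.1 * r.2 * (stmt7ind s.1 (U u ω) * stmt7ind s.2 (U (u - 1) ω))
            - s.1 * s.2 * (stmt7ind r.1 (U (u + 1) ω) * stmt7ind r.2 (U u ω))
            + r.1 * r.2 * (s.1 * s.2) := by
          intro ω; unfold stmt7X; simp only [Nat.add_sub_cancel]
          rw [← stmt7ind_mul r.2 s.1]; ring
        simp_rw [hpt]
        have hi3 : Integrable (fun ω => stmt7ind (min r.2 s.1) (U u ω)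
            * stmt7ind s.2 (U (u - 1) ω) * stmt7ind r.1 (U (u + 1) ω)) P := by
          apply stmt7_bdd_integrable P
            ((((stmt7ind_meas _).comp (hmeas u)).mul
              ((stmt7ind_meas _).comp (hmeas (u-1)))).mul
              ((stmt7ind_meas _).comp (hmeas (u+1)))) 1
          intro ω
          simp only [Pi.mul_apply, Function.comp_apply]
          rw [abs_mul, abs_mul]
          calc |stmt7ind (min r.2 s.1) (U u ω)| * |stmt7ind s.2 (U (u-1) ω)|
                * |stmt7ind r.1 (U (u+1) ω)| ≤ 1 * 1 * 1 := by
                apply mul_le_mul _ (stmt7ind_abs _ _) (abs_nonneg _) (by norm_num)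
                exact mul_le_mul (stmt7ind_abs _ _) (stmt7ind_abs _ _) (abs_nonneg _) zero_le_one
            _ = 1 := by norm_num
        refine (stmt7_combine P
          (fun ω => stmt7ind (min r.2 s.1) (U u ω) * stmt7ind s.2 (U (u - 1) ω)
          * stmt7ind r.1 (U (u + 1) ω))
          (fun ω => stmt7ind s.1 (U u ω) * stmt7ind s.2 (U (u - 1) ω))
          (fun ω => stmt7ind r.1 (U (u + 1) ω) * stmt7ind r.2 (U u ω))
          (r.1 * r.2) (s.1 * s.2) (r.1 * r.2 * (s.1 * s.2)) _ _ _
          hi3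
          (stmt7_integrable_ind2 P U hmeas hindep hunif u (u-1) _ _)
          (stmt7_integrable_ind2 P U hmeas hindep hunif (u+1) u _ _)
          (stmt7_int3 P U hmeas hindep hunif (by omega : u ≠ u - 1) (by omega : u ≠ u + 1)
          (by omega : u - 1 ≠ u + 1)
          (le_min hr20 hs10) ((min_le_left _ _).trans hr21) hs20 hs21 hr10 hr11)
          (stmt7_int2 P U hmeas hindep hunif (by omega : u ≠ u - 1) hs10 hs11 hs20 hs21)
          (stmt7_int2 P U hmeas hindep hunif (by omega : u + 1 ≠ u) hr10 hr11 hr20 hr21)).trans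
          (by ring)
      · rw [if_neg h1, if_neg h2, if_neg h3]
        have hp : IndepFun (fun ω => (U t ω, U (t - 1) ω))
            (fun ω => (U u ω, U (u - 1) ω)) P :=
          hindep.indepFun_prodMk_prodMk hmeas t (t-1) u (u-1)
            (by omega) (by omega) (by omega) (by omega)
        have hF : Measurable (fun z : ℝ × ℝ => stmt7ind r.1 z.1 * stmt7ind r.2 z.2
            - r.1 * r.2) :=
          (((stmt7ind_meas r.1).comp measurable_fst).mul
            ((stmt7ind_meas r.2).comp measurable_snd)).sub measurable_const
        have hG : Measurable (fun z : ℝ × ℝ => stmt7ind s.1 z.1 * stmt7ind s.2 z.2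
            - s.1 * s.2) :=
          (((stmt7ind_meas s.1).comp measurable_fst).mul
            ((stmt7ind_meas s.2).comp measurable_snd)).sub measurable_const
        have hI : IndepFun (stmt7X U r t) (stmt7X U s u) P := hp.comp hF hG
        have hEq := hI.integral_mul_eq_mul_integral
          (stmt7X_integrable P U hmeas hindep hunif ⟨⟨hr10, hr20⟩, ⟨hr11, hr21⟩⟩ t).aestronglyMeasurable
          (stmt7X_integrable P U hmeas hindep hunif ⟨⟨hs10, hs20⟩, ⟨hs11, hs21⟩⟩ u).aestronglyMeasurable
        rw [show (stmt7X U r t * stmt7X U s u)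
            = fun ω => stmt7X U r t ω * stmt7X U s u ω from rfl] at hEq
        rw [hEq, stmt7_EX P U hmeas hindep hunif ⟨⟨hr10, hr20⟩, ⟨hr11, hr21⟩⟩ ht,
          stmt7_EX P U hmeas hindep hunif ⟨⟨hs10, hs20⟩, ⟨hs11, hs21⟩⟩ hu, zero_mul]

end Main

/-- For iid Uniform[0,1] `U` and the bivariate empirical process
`V₂ₙ(r₁,r₂) = (n-1)^{-1/2} ∑_{t=2}^n [1{Uₜ ≤ r₁}1{U_{t-1} ≤ r₂} − r₁r₂]`,
the covariance `Cov(V₂ₙ(r), V₂ₙ(s))` converges, as `n → ∞`, to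
`min(r₁,s₁)min(r₂,s₂) + min(r₁,s₂)r₂s₁ + min(r₂,s₁)r₁s₂ − 3r₁r₂s₁s₂`. -/
theorem stmt_7 {Ω : Type*} [MeasurableSpace Ω] (P : Measure Ω) [IsProbabilityMeasure P]
    (U : ℕ → Ω → ℝ) (hmeas : ∀ t, Measurable (U t))
    (hindep : iIndepFun U P)
    (hunif : ∀ t, P.map (U t) = (volume : Measure ℝ).restrict (Set.Icc 0 1))
    (V : ℕ → ℝ × ℝ → Ω → ℝ)
    (hV : ∀ n r ω, V n r ω = (1 / Real.sqrt ((n : ℝ) - 1)) *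
      ∑ t ∈ Finset.Icc 2 n,
        ((if U t ω ≤ r.1 then (1 : ℝ) else 0) * (if U (t - 1) ω ≤ r.2 then (1 : ℝ) else 0)
          - r.1 * r.2))
    (r s : ℝ × ℝ) (hr : r ∈ Set.Icc (0 : ℝ × ℝ) 1) (hs : s ∈ Set.Icc (0 : ℝ × ℝ) 1) :
    Tendsto (fun n =>
        (∫ ω, V n r ω * V n s ω ∂P) - (∫ ω, V n r ω ∂P) * (∫ ω, V n s ω ∂P))
      atTop
      (nhds (min r.1 s.1 * min r.2 s.2 + min r.1 s.2 * r.2 * s.1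
        + min r.2 s.1 * r.1 * s.2 - 3 * (r.1 * r.2 * s.1 * s.2))) := by
  have hEV : ∀ (n : ℕ) (w : ℝ × ℝ), w ∈ Set.Icc (0 : ℝ × ℝ) 1 →
      ∫ ω, V n w ω ∂P = 0 := by
    intro n w hw
    have hVf : (fun ω => V n w ω) = fun ω => (1 / Real.sqrt ((n : ℝ) - 1)) *
        ∑ t ∈ Finset.Icc 2 n, stmt7X U w t ω := funext fun ω => hV n w ω
    rw [hVf, integral_const_mul,
      integral_finset_sum _ (fun t _ => stmt7X_integrable P U hmeas hindep hunif hw t),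
      Finset.sum_congr rfl
        (fun t htm => stmt7_EX P U hmeas hindep hunif hw (Finset.mem_Icc.mp htm).1)]
    simp
  have hEVV : ∀ n : ℕ, 2 ≤ n → ∫ ω, V n r ω * V n s ω ∂P =
      (1 / ((n : ℝ) - 1)) *
        ((min r.1 s.1 * min r.2 s.2 - r.1 * r.2 * (s.1 * s.2)) * ((n : ℝ) - 1)
          + ((min r.1 s.2 * r.2 * s.1 - r.1 * r.2 * (s.1 * s.2))
            + (min r.2 s.1 * r.1 * s.2 - r.1 * r.2 * (s.1 * s.2))) * ((n : ℝ) - 2)) := by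
    intro n hn
    have hc : (0 : ℝ) ≤ (n : ℝ) - 1 := by
      have : (2 : ℝ) ≤ (n : ℝ) := by exact_mod_cast hn
      linarith
    have hpt : (fun ω => V n r ω * V n s ω) = fun ω => (1 / ((n : ℝ) - 1)) *
        ∑ t ∈ Finset.Icc 2 n, ∑ u ∈ Finset.Icc 2 n, stmt7X U r t ω * stmt7X U s u ω := by
      funext ω
      have e1 : V n r ω = (1 / Real.sqrt ((n : ℝ) - 1)) *
          ∑ t ∈ Finset.Icc 2 n, stmt7X U r t ω := hV n r ω
      have e2 : V n s ω = (1 / Real.sqrt ((n : ℝ) - 1)) *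
          ∑ u ∈ Finset.Icc 2 n, stmt7X U s u ω := hV n s ω
      rw [e1, e2, ← Finset.sum_mul_sum]
      generalize hgen : Real.sqrt ((n : ℝ) - 1) = a
      have hsq : a * a = (n : ℝ) - 1 := by rw [← hgen]; exact Real.mul_self_sqrt hc
      rw [← hsq]; ring
    rw [hpt, integral_const_mul,
      integral_finset_sum _ (fun t _ => integrable_finset_sum _
        (fun u _ => stmt7XY_integrable P U hmeas hindep hunif hr hs t u)),
      Finset.sum_congr rfl (fun t _ => integral_finset_sum _
        (fun u _ => stmt7XY_integrable P U hmeas hindep hunif hr hs t u)),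
      Finset.sum_congr rfl (fun t htm => Finset.sum_congr rfl
        (fun u hum => stmt7_EXY P U hmeas hindep hunif hr hs
          (Finset.mem_Icc.mp htm).1 (Finset.mem_Icc.mp hum).1)),
      stmt7_sum _ _ _ n hn]
  have hnlim : Tendsto (fun n : ℕ => (((n : ℝ) - 1))⁻¹) atTop (nhds 0) := by
    apply Tendsto.inv_tendsto_atTop
    exact (tendsto_atTop_add_const_right atTop (-1)
      (tendsto_natCast_atTop_atTop (R := ℝ))).congr (fun n => by ring)
  have hlim : Tendsto (fun n : ℕ =>
      (min r.1 s.1 * min r.2 s.2 - r.1 * r.2 * (s.1 * s.2))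
      + ((min r.1 s.2 * r.2 * s.1 - r.1 * r.2 * (s.1 * s.2))
        + (min r.2 s.1 * r.1 * s.2 - r.1 * r.2 * (s.1 * s.2)))
        * (1 - ((n : ℝ) - 1)⁻¹)) atTop
      (nhds (min r.1 s.1 * min r.2 s.2 + min r.1 s.2 * r.2 * s.1
        + min r.2 s.1 * r.1 * s.2 - 3 * (r.1 * r.2 * s.1 * s.2))) := by
    have heq : min r.1 s.1 * min r.2 s.2 + min r.1 s.2 * r.2 * s.1
        + min r.2 s.1 * r.1 * s.2 - 3 * (r.1 * r.2 * s.1 * s.2)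
        = (min r.1 s.1 * min r.2 s.2 - r.1 * r.2 * (s.1 * s.2))
          + ((min r.1 s.2 * r.2 * s.1 - r.1 * r.2 * (s.1 * s.2))
            + (min r.2 s.1 * r.1 * s.2 - r.1 * r.2 * (s.1 * s.2))) * (1 - 0) := by ring
    rw [heq]
    exact tendsto_const_nhds.add (tendsto_const_nhds.mul (tendsto_const_nhds.sub hnlim))
  apply Tendsto.congr' _ hlim
  filter_upwards [eventually_ge_atTop 2] with n hn
  have hne : ((n : ℝ) - 1) ≠ 0 := by
    have : (2 : ℝ) ≤ (n : ℝ) := by exact_mod_cast hn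
    linarith
  rw [hEV n r hr, hEV n s hs, hEVV n hn]
  field_simp
  ring_nf
end

section
/- Let Y_t = α₁Y_{t-1} + α₂Y_{t-2} + σ₂ε_t with ε_t iid standard normal be a stationary Gaussian AR(2) process, and let F_t(y) = Φ((y − αY_{t-1})/s) be the conditional cdf of the misspecified AR(1) null model evaluated with pseudo-true parameters α, s such that E[(Y_t − αY_{t-1})²] is minimized over α with s² the resulting variance. Then the generalized residuals U_t = Φ((Y_t − αY_{t-1})/s) satisfy P(U_t ≤ r) = r for all r ∈ [0,1], i.e., they are marginally uniform even though the model is misspecified. -/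
open MeasureTheory ProbabilityTheory Set

open Real Filter Asymptotics in
open scoped NNReal ENNReal in
lemma aux_integrable_sq_exp {b : ℝ} (hb : 0 < b) :
    Integrable (fun x : ℝ => x ^ 2 * Real.exp (-b * x ^ 2)) := by
  have h := integrable_rpow_mul_exp_neg_mul_sq hb (s := 2) (by norm_num)
  have : ∀ x : ℝ, x ^ (2 : ℝ) = x ^ (2 : ℕ) := fun x => by
    rw [show (2:ℝ) = ((2:ℕ):ℝ) by norm_num, Real.rpow_natCast]
  simpa [this] using h

open Real Filter Asymptotics in
open scoped NNReal ENNReal in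
lemma aux_tendsto_mul_exp {b : ℝ} (hb : 0 < b) :
    Tendsto (fun x : ℝ => x * Real.exp (-b * x ^ 2)) atTop (nhds 0) := by
  have h := rpow_mul_exp_neg_mul_sq_isLittleO_exp_neg hb (1 : ℝ)
  have h2 : (fun x : ℝ => x * Real.exp (-b * x ^ 2)) =ᶠ[atTop]
      fun x : ℝ => x ^ (1 : ℝ) * Real.exp (-b * x ^ 2) := by
    filter_upwards [eventually_ge_atTop (0:ℝ)] with x hx
    rw [Real.rpow_one]
  have h3 : Tendsto (fun x : ℝ => Real.exp (-(1/2) * x)) atTop (nhds 0) := by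
    have h4 : Tendsto (fun x : ℝ => -(1/2) * x) atTop atBot := by
      have h5 : Tendsto (fun x : ℝ => (1/2 : ℝ) * x) atTop atTop :=
        tendsto_id.const_mul_atTop (by norm_num)
      exact (tendsto_neg_atTop_atBot.comp h5).congr (fun x => by
        simp only [Function.comp]; ring)
    exact Real.tendsto_exp_atBot.comp h4
  exact (h2.trans_isLittleO h).isBigO.trans_tendsto h3

open Real Filter Asymptotics in
open scoped NNReal ENNReal in
lemma aux_integral_sq_exp {b : ℝ} (hb : 0 < b) :
    ∫ x : ℝ, x ^ 2 * Real.exp (-b * x ^ 2) = Real.sqrt (π / b) / (2 * b) := by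
  set f : ℝ → ℝ := fun x => -(x * Real.exp (-b * x ^ 2)) / (2 * b) with hf
  set f' : ℝ → ℝ := fun x => x ^ 2 * Real.exp (-b * x ^ 2)
      - Real.exp (-b * x ^ 2) / (2 * b) with hf'
  have hderiv : ∀ x : ℝ, HasDerivAt f (f' x) x := by
    intro x
    have h1 : HasDerivAt (fun x : ℝ => -b * x ^ 2) (-b * (2 * x)) x := by
      simpa using ((hasDerivAt_pow 2 x).const_mul (-b))
    have h2 : HasDerivAt (fun x : ℝ => Real.exp (-b * x ^ 2))
        (Real.exp (-b * x ^ 2) * (-b * (2 * x))) x := h1.exp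
    have h3 : HasDerivAt (fun x : ℝ => x * Real.exp (-b * x ^ 2))
        (1 * Real.exp (-b * x ^ 2) + x * (Real.exp (-b * x ^ 2) * (-b * (2 * x)))) x :=
      (hasDerivAt_id x).mul h2
    have h4 := (h3.neg).div_const (2 * b)
    refine h4.congr_deriv ?_
    simp only [hf']
    field_simp
    ring
  have hbot : Tendsto f atBot (nhds 0) := by
    have h6 : Tendsto (f ∘ Neg.neg) atTop (nhds 0) := by
      have := ((aux_tendsto_mul_exp hb).div_const (2 * b))
      have heq : f ∘ Neg.neg = fun x : ℝ => (x * Real.exp (-b * x ^ 2)) / (2 * b) := by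
        funext x; simp only [Function.comp, hf, neg_sq]; ring
      rw [heq]
      simpa using this
    exact (h6.comp tendsto_neg_atBot_atTop).congr (fun x => by
      simp [Function.comp])
  have htop : Tendsto f atTop (nhds 0) := by
    have := ((aux_tendsto_mul_exp hb).neg).div_const (2 * b)
    simpa [hf] using this
  have hint' : Integrable f' := by
    exact (aux_integrable_sq_exp hb).sub ((integrable_exp_neg_mul_sq hb).div_const _)
  have h0 : ∫ x, f' x = 0 := by
    rw [MeasureTheory.integral_of_hasDerivAt_of_tendsto hderiv hint' hbot htop]
    ring
  have := integral_sub (aux_integrable_sq_exp hb) ((integrable_exp_neg_mul_sq hb).div_const (2*b))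
  rw [hf'] at h0
  simp only at h0
  rw [this] at h0
  have h5 : ∫ x : ℝ, Real.exp (-b * x ^ 2) / (2 * b) = Real.sqrt (π / b) / (2 * b) := by
    rw [integral_div, integral_gaussian]
  linarith [h0, h5]

open Real Filter Asymptotics in
open scoped NNReal ENNReal in
lemma aux_pdf_eq {v : ℝ≥0} (hv : v ≠ 0) (x : ℝ) :
    gaussianPDFReal 0 v x = (Real.sqrt (2 * π * v))⁻¹ * Real.exp (-(2 * (v:ℝ))⁻¹ * x ^ 2) := by
  rw [gaussianPDFReal, sub_zero]
  congr 1
  ring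

open Real Filter Asymptotics in
open scoped NNReal ENNReal in
lemma aux_integrable_sq_pdf {v : ℝ≥0} (hv : v ≠ 0) :
    Integrable (fun x : ℝ => x ^ 2 * gaussianPDFReal 0 v x) := by
  have hv' : (0:ℝ) < v := lt_of_le_of_ne v.coe_nonneg (by exact_mod_cast (Ne.symm hv))
  have hb : (0:ℝ) < (2 * (v:ℝ))⁻¹ := by positivity
  have h := ((aux_integrable_sq_exp hb).const_mul ((Real.sqrt (2 * π * v))⁻¹))
  refine h.congr ?_
  filter_upwards with x
  rw [aux_pdf_eq hv]
  ring

open Real Filter Asymptotics in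
open scoped NNReal ENNReal in
lemma aux_integral_sq_pdf {v : ℝ≥0} (hv : v ≠ 0) :
    ∫ x : ℝ, x ^ 2 * gaussianPDFReal 0 v x = v := by
  have hv' : (0:ℝ) < v := lt_of_le_of_ne v.coe_nonneg (by exact_mod_cast (Ne.symm hv))
  have hb : (0:ℝ) < (2 * (v:ℝ))⁻¹ := by positivity
  calc ∫ x : ℝ, x ^ 2 * gaussianPDFReal 0 v x
      = ∫ x : ℝ, (Real.sqrt (2 * π * v))⁻¹ * (x ^ 2 * Real.exp (-(2 * (v:ℝ))⁻¹ * x ^ 2)) := by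
        congr 1; funext x; rw [aux_pdf_eq hv]; ring
    _ = (Real.sqrt (2 * π * v))⁻¹ * (Real.sqrt (π / (2 * (v:ℝ))⁻¹) / (2 * (2 * (v:ℝ))⁻¹)) := by
        rw [integral_const_mul, aux_integral_sq_exp hb]
    _ = v := by
        rw [show π / (2 * (v:ℝ))⁻¹ = 2 * π * v by field_simp]
        rw [show 2 * (2 * (v:ℝ))⁻¹ = (v:ℝ)⁻¹ by field_simp]
        have hs : Real.sqrt (2 * π * v) ≠ 0 := by
          refine ne_of_gt (Real.sqrt_pos.mpr (by positivity))
        field_simp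

open Real Filter Asymptotics in
open scoped NNReal ENNReal in
lemma aux_integral_sq_gaussianReal (v : ℝ≥0) :
    ∫ x : ℝ, x ^ 2 ∂(gaussianReal 0 v) = v := by
  by_cases hv : v = 0
  · subst hv
    rw [gaussianReal_zero_var]
    simp
  · rw [gaussianReal_of_var_ne_zero 0 hv]
    have hmeas : Measurable fun x : ℝ => (gaussianPDFReal 0 v x).toNNReal :=
      (measurable_gaussianPDFReal 0 v).real_toNNReal
    have hdens : (gaussianPDF 0 v) = fun x => ((gaussianPDFReal 0 v x).toNNReal : ℝ≥0∞) := by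
      funext x; rfl
    rw [hdens, integral_withDensity_eq_integral_smul hmeas]
    rw [← aux_integral_sq_pdf hv]
    congr 1
    funext x
    simp [NNReal.smul_def, Real.coe_toNNReal _ (gaussianPDFReal_nonneg 0 v x)]
    ring

open Real Filter Asymptotics in
open scoped NNReal ENNReal in
lemma aux_conv_pdf {v u : ℝ≥0} (hv : v ≠ 0) (hu : u ≠ 0) (z : ℝ) :
    ∫ x : ℝ, gaussianPDFReal 0 v x * gaussianPDFReal 0 u (z - x)
      = gaussianPDFReal 0 (v + u) z := by
  have hV : (0:ℝ) < v := lt_of_le_of_ne v.coe_nonneg (by exact_mod_cast (Ne.symm hv))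
  have hU : (0:ℝ) < u := lt_of_le_of_ne u.coe_nonneg (by exact_mod_cast (Ne.symm hu))
  set V : ℝ := (v:ℝ)
  set U : ℝ := (u:ℝ)
  set k : ℝ := (V + U) / (2 * U * V) with hk
  set m : ℝ := V * z / (V + U) with hm
  have hkpos : 0 < k := by positivity
  have key : ∀ x : ℝ, gaussianPDFReal 0 v x * gaussianPDFReal 0 u (z - x)
      = ((Real.sqrt (2 * π * V))⁻¹ * (Real.sqrt (2 * π * U))⁻¹
          * Real.exp (-z ^ 2 / (2 * (V + U)))) * Real.exp (-k * (x - m) ^ 2) := by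
    intro x
    rw [gaussianPDFReal, gaussianPDFReal, sub_zero, sub_zero]
    rw [show (√(2 * π * ↑v))⁻¹ * rexp (-x ^ 2 / (2 * ↑v)) * ((√(2 * π * ↑u))⁻¹
        * rexp (-(z - x) ^ 2 / (2 * ↑u)))
      = (√(2 * π * V))⁻¹ * (√(2 * π * U))⁻¹
        * (rexp (-x ^ 2 / (2 * V)) * rexp (-(z - x) ^ 2 / (2 * U))) by ring]
    rw [← Real.exp_add]
    have hexp : -x ^ 2 / (2 * V) + -(z - x) ^ 2 / (2 * U)
        = -z ^ 2 / (2 * (V + U)) + -k * (x - m) ^ 2 := by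
      rw [hk, hm]
      field_simp
      ring
    rw [hexp, Real.exp_add]
    ring
  rw [integral_congr_ae (Filter.Eventually.of_forall key), integral_const_mul]
  have hshift : ∫ x : ℝ, Real.exp (-k * (x - m) ^ 2) = Real.sqrt (π / k) := by
    rw [integral_sub_right_eq_self (fun x => Real.exp (-k * x ^ 2)) m, integral_gaussian]
  rw [hshift, gaussianPDFReal, sub_zero]
  have hcoe : ((v + u : ℝ≥0) : ℝ) = V + U := by push_cast; ring
  rw [hcoe]
  rw [show -z ^ 2 / (2 * (V + U)) = -z ^ 2 / (2 * (V + U)) from rfl]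
  have hconst : (√(2 * π * V))⁻¹ * (√(2 * π * U))⁻¹ * √(π / k) = (√(2 * π * (V + U)))⁻¹ := by
    rw [← Real.sqrt_inv, ← Real.sqrt_inv, ← Real.sqrt_inv, ← Real.sqrt_mul (by positivity),
      ← Real.sqrt_mul (by positivity)]
    congr 1
    rw [hk]
    field_simp
  calc (√(2 * π * V))⁻¹ * (√(2 * π * U))⁻¹ * rexp (-z ^ 2 / (2 * (V + U))) * √(π / k)
      = ((√(2 * π * V))⁻¹ * (√(2 * π * U))⁻¹ * √(π / k)) * rexp (-z ^ 2 / (2 * (V + U))) := by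
        ring
    _ = (√(2 * π * (V + U)))⁻¹ * rexp (-z ^ 2 / (2 * (V + U))) := by rw [hconst]

open Real Filter Asymptotics in
open scoped NNReal ENNReal in
lemma aux_pdf_shift (u : ℝ≥0) (x z : ℝ) :
    gaussianPDFReal x u z = gaussianPDFReal 0 u (z - x) := by
  simp [gaussianPDFReal]

open Real Filter Asymptotics in
open scoped NNReal ENNReal in
lemma aux_integrable_conv {v u : ℝ≥0} (z : ℝ) :
    Integrable (fun x : ℝ => gaussianPDFReal 0 v x * gaussianPDFReal 0 u (z - x)) := by
  set C : ℝ := (Real.sqrt (2 * π * u))⁻¹ with hC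
  have hCnn : 0 ≤ C := by positivity
  have hbound : ∀ y : ℝ, gaussianPDFReal 0 u y ≤ C := by
    intro y
    rw [gaussianPDFReal, sub_zero]
    calc (√(2 * π * ↑u))⁻¹ * rexp (-y ^ 2 / (2 * ↑u)) ≤ (√(2 * π * ↑u))⁻¹ * 1 := by
          refine mul_le_mul_of_nonneg_left ?_ (by positivity)
          rw [Real.exp_le_one_iff]
          apply div_nonpos_of_nonpos_of_nonneg
          · simp [sq_nonneg]
          · positivity
      _ = C := by rw [mul_one]
  refine Integrable.mono' ((integrable_gaussianPDFReal 0 v).const_mul C) ?_ ?_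
  · exact ((measurable_gaussianPDFReal 0 v).mul
      ((measurable_gaussianPDFReal 0 u).comp (measurable_const.sub measurable_id))).aestronglyMeasurable
  · filter_upwards with x
    rw [Real.norm_eq_abs, abs_of_nonneg (mul_nonneg (gaussianPDFReal_nonneg 0 v x)
      (gaussianPDFReal_nonneg 0 u _))]
    calc gaussianPDFReal 0 v x * gaussianPDFReal 0 u (z - x)
        ≤ gaussianPDFReal 0 v x * C :=
          mul_le_mul_of_nonneg_left (hbound _) (gaussianPDFReal_nonneg 0 v x)
      _ = C * gaussianPDFReal 0 v x := mul_comm _ _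

open Real Filter Asymptotics in
open scoped NNReal ENNReal in
lemma aux_lconv {v u : ℝ≥0} (hv : v ≠ 0) (hu : u ≠ 0) (z : ℝ) :
    ∫⁻ x : ℝ, gaussianPDF 0 v x * gaussianPDF x u z = gaussianPDF 0 (v + u) z := by
  have h1 : ∀ x : ℝ, gaussianPDF 0 v x * gaussianPDF x u z
      = ENNReal.ofReal (gaussianPDFReal 0 v x * gaussianPDFReal 0 u (z - x)) := by
    intro x
    rw [gaussianPDF, gaussianPDF, aux_pdf_shift u x z,
      ENNReal.ofReal_mul (gaussianPDFReal_nonneg 0 v x)]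
  simp_rw [h1]
  rw [← ofReal_integral_eq_lintegral_ofReal (aux_integrable_conv z)
    (Filter.Eventually.of_forall fun x => mul_nonneg (gaussianPDFReal_nonneg 0 v x)
      (gaussianPDFReal_nonneg 0 u _))]
  rw [aux_conv_pdf hv hu z]
  rfl

open Real Filter Asymptotics in
open scoped NNReal ENNReal in
lemma aux_gaussian_conv {v u : ℝ≥0} (hu : u ≠ 0) :
    ((gaussianReal 0 v).prod (gaussianReal 0 u)).map (fun p : ℝ × ℝ => p.1 + p.2)
      = gaussianReal 0 (v + u) := by
  by_cases hv : v = 0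
  · subst hv
    rw [gaussianReal_zero_var, Measure.dirac_prod, Measure.map_map
      (show Measurable (fun p : ℝ × ℝ => p.1 + p.2) from measurable_fst.add measurable_snd) measurable_prodMk_left]
    have : ((fun p : ℝ × ℝ => p.1 + p.2) ∘ Prod.mk (0:ℝ)) = (fun y : ℝ => (0:ℝ) + y) := rfl
    rw [this, gaussianReal_map_const_add, add_zero, zero_add]
  · have hvu : v + u ≠ 0 := by
      intro h
      exact hv (by simpa using congrArg (·) h ▸ (add_eq_zero.mp h).1)
    ext s hs
    rw [Measure.map_apply (show Measurable (fun p : ℝ × ℝ => p.1 + p.2) from measurable_fst.add measurable_snd) hs,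
      Measure.prod_apply ((show Measurable (fun p : ℝ × ℝ => p.1 + p.2) from measurable_fst.add measurable_snd) hs)]
    have hslice : ∀ x : ℝ, (Prod.mk x ⁻¹' ((fun p : ℝ × ℝ => p.1 + p.2) ⁻¹' s))
        = (fun y : ℝ => x + y) ⁻¹' s := fun x => rfl
    have h2 : ∀ x : ℝ, gaussianReal 0 u ((fun y : ℝ => x + y) ⁻¹' s)
        = ∫⁻ z in s, gaussianPDF x u z := by
      intro x
      rw [← Measure.map_apply (measurable_const_add x) hs, gaussianReal_map_const_add,
        zero_add, gaussianReal_apply _ hu]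
    simp_rw [hslice, h2]
    have hmeas2 : Measurable (fun x : ℝ => ∫⁻ z in s, gaussianPDF x u z) := by
      have : Measurable (Function.uncurry fun x z : ℝ => gaussianPDF x u z) := by
        apply Measurable.ennreal_ofReal
        unfold gaussianPDFReal
        fun_prop
      exact Measurable.lintegral_prod_right this
    rw [gaussianReal_of_var_ne_zero 0 hv,
      lintegral_withDensity_eq_lintegral_mul _ (measurable_gaussianPDF 0 v) hmeas2]
    have h3 : ∀ x : ℝ, gaussianPDF 0 v x * ∫⁻ z in s, gaussianPDF x u z
        = ∫⁻ z in s, gaussianPDF 0 v x * gaussianPDF x u z := by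
      intro x
      rw [lintegral_const_mul]
      exact (measurable_gaussianPDF x u)
    simp only [Pi.mul_apply]
    simp_rw [h3]
    rw [lintegral_lintegral_swap]
    · simp_rw [aux_lconv hv hu]
      rw [← gaussianReal_apply _ hvu]
    · apply Measurable.aemeasurable
      change Measurable ((fun p : ℝ × ℝ => gaussianPDF 0 v p.1) * (fun p : ℝ × ℝ => gaussianPDF p.1 u p.2))
      apply Measurable.mul
      · exact (measurable_gaussianPDF 0 v).comp measurable_fst
      · apply Measurable.ennreal_ofReal
        unfold gaussianPDFReal
        fun_prop

open Real Filter Asymptotics in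
open scoped NNReal ENNReal in
lemma aux_map_add_of_indep {Ω : Type*} [MeasurableSpace Ω] (P : Measure Ω)
    [IsProbabilityMeasure P] {X Z : Ω → ℝ} (hX : Measurable X) (hZ : Measurable Z)
    (h : IndepFun X Z P) {v u : ℝ≥0} (hu : u ≠ 0)
    (hXm : P.map X = gaussianReal 0 v) (hZm : P.map Z = gaussianReal 0 u) :
    P.map (fun ω => X ω + Z ω) = gaussianReal 0 (v + u) := by
  have hpair := (indepFun_iff_map_prod_eq_prod_map_map hX.aemeasurable hZ.aemeasurable).mp h
  have h1 : P.map (fun ω => X ω + Z ω)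
      = (P.map (fun ω => (X ω, Z ω))).map (fun p : ℝ × ℝ => p.1 + p.2) := by
    rw [Measure.map_map (show Measurable (fun p : ℝ × ℝ => p.1 + p.2) from measurable_fst.add measurable_snd) (hX.prodMk hZ)]
    rfl
  rw [h1, hpair, hXm, hZm, aux_gaussian_conv hu]

open Real Filter Asymptotics in
open scoped NNReal ENNReal in
-- cdf machinery for Φ
lemma aux_Phi_primitive (x : ℝ) :
    ((gaussianReal 0 1 (Set.Iic x)).toReal) = ∫ t in Set.Iic x, gaussianPDFReal 0 1 t := by
  rw [gaussianReal_apply_eq_integral 0 one_ne_zero, ENNReal.toReal_ofReal]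
  exact setIntegral_nonneg measurableSet_Iic fun t _ => gaussianPDFReal_nonneg 0 1 t

open Real Filter Asymptotics in
open scoped NNReal ENNReal in
lemma aux_Phi_interval (a b : ℝ) :
    (∫ t in Set.Iic b, gaussianPDFReal 0 1 t)
      = (∫ t in Set.Iic a, gaussianPDFReal 0 1 t) + ∫ t in a..b, gaussianPDFReal 0 1 t := by
  have hint := integrable_gaussianPDFReal 0 1
  rcases le_total a b with hab | hab
  · rw [intervalIntegral.integral_of_le hab, ← setIntegral_union (Iic_disjoint_Ioc le_rfl)
      measurableSet_Ioc hint.integrableOn hint.integrableOn, Set.Iic_union_Ioc_eq_Iic hab]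
  · rw [intervalIntegral.integral_of_ge hab]
    have h2 : (∫ t in Set.Iic a, gaussianPDFReal 0 1 t)
        = (∫ t in Set.Iic b, gaussianPDFReal 0 1 t) + ∫ t in Set.Ioc b a, gaussianPDFReal 0 1 t := by
      rw [← setIntegral_union (Iic_disjoint_Ioc le_rfl)
        measurableSet_Ioc hint.integrableOn hint.integrableOn, Set.Iic_union_Ioc_eq_Iic hab]
    rw [h2]
    ring

open Real Filter Asymptotics in
open scoped NNReal ENNReal in
/-- **Marginal uniformity of generalized residuals under dynamic misspecification.**
Let the true DGP be a mean-zero Gaussian AR(2): `Yₜ = α₁Y_{t-1} + α₂Y_{t-2} + σ₂εₜ`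
with `εₜ` standard normal, independent of the past, and the past `(Y_{t-1}, Y_{t-2})`
jointly Gaussian mean zero. Let `α, s` be the pseudo-true AR(1) parameters (`α`
minimizes `E[(Yₜ − aY_{t-1})²]`, `s²` is the minimized value). Then the generalized
residuals `Uₜ = Φ((Yₜ − αY_{t-1})/s)` of the misspecified AR(1) null model satisfy
`P(Uₜ ≤ r) = r` for all `r ∈ [0,1]`: they are marginally uniform. -/
theorem stmt_12 {Ω : Type*} [MeasurableSpace Ω] (P : Measure Ω) [IsProbabilityMeasure P]
    (Y ε : ℕ → Ω → ℝ) (hmeasY : ∀ t, Measurable (Y t)) (hmeasε : ∀ t, Measurable (ε t))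
    (α₁ α₂ σ₂ : ℝ) (hσ₂ : 0 < σ₂) (t : ℕ) (ht : 2 ≤ t)
    (hrec : ∀ ω, Y t ω = α₁ * Y (t - 1) ω + α₂ * Y (t - 2) ω + σ₂ * ε t ω)
    (hεlaw : P.map (ε t) = gaussianReal 0 1)
    (hεindep : IndepFun (fun ω => (Y (t - 1) ω, Y (t - 2) ω)) (ε t) P)
    (hGauss : ∀ a b : ℝ, ∃ v : NNReal,
      P.map (fun ω => a * Y (t - 1) ω + b * Y (t - 2) ω) = gaussianReal 0 v)
    (α s : ℝ) (hs : 0 < s)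
    (hαmin : ∀ a : ℝ,
      ∫ ω, (Y t ω - α * Y (t - 1) ω) ^ 2 ∂P ≤ ∫ ω, (Y t ω - a * Y (t - 1) ω) ^ 2 ∂P)
    (hs2 : s ^ 2 = ∫ ω, (Y t ω - α * Y (t - 1) ω) ^ 2 ∂P)
    (Φ : ℝ → ℝ) (hΦ : ∀ x, Φ x = ((gaussianReal 0 1) (Set.Iic x)).toReal) :
    ∀ r ∈ Set.Icc (0 : ℝ) 1,
      P {ω | Φ ((Y t ω - α * Y (t - 1) ω) / s) ≤ r} = ENNReal.ofReal r := by
  -- Step 1: distribution of Z := Yₜ - αY_{t-1}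
  obtain ⟨v, hv⟩ := hGauss (α₁ - α) α₂
  set W : Ω → ℝ := fun ω => (α₁ - α) * Y (t - 1) ω + α₂ * Y (t - 2) ω with hW
  set ξ : Ω → ℝ := fun ω => σ₂ * ε t ω with hξ
  set Z : Ω → ℝ := fun ω => Y t ω - α * Y (t - 1) ω with hZ
  have hWmeas : Measurable W := ((hmeasY (t-1)).const_mul _).add ((hmeasY (t-2)).const_mul _)
  have hξmeas : Measurable ξ := (hmeasε t).const_mul _
  have hZmeas : Measurable Z := (hmeasY t).sub ((hmeasY (t-1)).const_mul _)
  set u : ℝ≥0 := ⟨σ₂ ^ 2, sq_nonneg _⟩ with hu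
  have hune : u ≠ 0 := by
    intro h
    have : σ₂ ^ 2 = 0 := congrArg NNReal.toReal h
    exact (pow_ne_zero 2 (ne_of_gt hσ₂)) this
  have hξlaw : P.map ξ = gaussianReal 0 u := by
    have h1 : P.map ξ = (P.map (ε t)).map (fun x => σ₂ * x) := by
      rw [Measure.map_map (measurable_const_mul σ₂) (hmeasε t)]
      rfl
    rw [h1, hεlaw, gaussianReal_map_const_mul σ₂, mul_zero, mul_one]
    rfl
  have hindep : IndepFun W ξ P := by
    have := hεindep.comp (φ := fun p : ℝ × ℝ => (α₁ - α) * p.1 + α₂ * p.2)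
      (ψ := fun x : ℝ => σ₂ * x)
      ((measurable_fst.const_mul _).add (measurable_snd.const_mul _)) (measurable_const_mul σ₂)
    exact this
  have hZeq : Z = fun ω => W ω + ξ ω := by
    funext ω
    simp only [hZ, hW, hξ, hrec ω]
    ring
  have hmapZ : P.map Z = gaussianReal 0 (v + u) := by
    rw [hZeq]
    exact aux_map_add_of_indep P hWmeas hξmeas hindep hune hv hξlaw
  -- Step 2: s² = v + u
  have hs2' : s ^ 2 = ((v + u : ℝ≥0) : ℝ) := by
    rw [hs2]
    have h1 : ∫ ω, (Y t ω - α * Y (t - 1) ω) ^ 2 ∂P = ∫ x : ℝ, x ^ 2 ∂(P.map Z) := by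
      rw [integral_map hZmeas.aemeasurable]
      exact (measurable_id.pow_const 2).aestronglyMeasurable
    rw [h1, hmapZ, aux_integral_sq_gaussianReal]
  -- Step 3: V := Z/s is standard normal
  set V : Ω → ℝ := fun ω => Z ω / s with hV
  have hVmeas : Measurable V := hZmeas.div_const s
  have hmapV : P.map V = gaussianReal 0 1 := by
    have h1 : P.map V = (P.map Z).map (fun x => s⁻¹ * x) := by
      rw [Measure.map_map (measurable_const_mul s⁻¹) hZmeas]
      have : ((fun x => s⁻¹ * x) ∘ Z) = V := by
        funext ω; simp [hV, div_eq_inv_mul]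
      rw [this]
    rw [h1, hmapZ, gaussianReal_map_const_mul s⁻¹, mul_zero]
    congr 1
    have : ((NNReal.mk (s⁻¹ ^ 2) (sq_nonneg _) * (v + u) : ℝ≥0) : ℝ) = 1 := by
      push_cast
      have h2 : (v:ℝ) + (u:ℝ) = s ^ 2 := by rw [hs2']; push_cast; ring
      rw [h2]
      field_simp
    exact_mod_cast this
  -- Step 4: properties of Φ
  have hΦprim : ∀ x, Φ x = ∫ t in Set.Iic x, gaussianPDFReal 0 1 t := fun x => by
    rw [hΦ, aux_Phi_primitive]
  have hgint := integrable_gaussianPDFReal 0 1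
  have hΦint : ∀ a b : ℝ, Φ b = Φ a + ∫ t in a..b, gaussianPDFReal 0 1 t := fun a b => by
    rw [hΦprim, hΦprim, aux_Phi_interval a b]
  have hΦcont : Continuous Φ := by
    have h1 : Continuous fun b => ∫ t in (0:ℝ)..b, gaussianPDFReal 0 1 t :=
      intervalIntegral.continuous_primitive (fun a b => hgint.intervalIntegrable) 0
    have : Φ = fun b => Φ 0 + ∫ t in (0:ℝ)..b, gaussianPDFReal 0 1 t := funext fun b => hΦint 0 b
    rw [this]
    exact continuous_const.add h1
  have hΦmono : StrictMono Φ := by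
    intro x y hxy
    have h1 : 0 < ∫ t in x..y, gaussianPDFReal 0 1 t :=
      intervalIntegral.intervalIntegral_pos_of_pos (hgint.intervalIntegrable)
        (fun t => gaussianPDFReal_pos 0 1 t one_ne_zero) hxy
    have := hΦint x y
    linarith
  have hΦpos : ∀ x, 0 < Φ x := by
    intro x
    rw [hΦ]
    refine ENNReal.toReal_pos ?_ (measure_ne_top _ _)
    intro h
    have h2 := (gaussianReal_absolutelyContinuous' 0 one_ne_zero) h
    rw [Real.volume_Iic] at h2
    exact ENNReal.top_ne_zero h2
  have hΦle1 : ∀ x, Φ x ≤ 1 := fun x => by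
    rw [hΦ]
    exact ENNReal.toReal_le_of_le_ofReal zero_le_one (by simpa using prob_le_one)
  have hΦtop : Tendsto Φ atTop (nhds 1) := by
    have : Φ = cdf (gaussianReal 0 1) := funext fun x => by rw [hΦ, cdf_eq_real, measureReal_def]
    rw [this]; exact tendsto_cdf_atTop _
  have hΦbot : Tendsto Φ atBot (nhds 0) := by
    have : Φ = cdf (gaussianReal 0 1) := funext fun x => by rw [hΦ, cdf_eq_real, measureReal_def]
    rw [this]; exact tendsto_cdf_atBot _
  -- Step 5: conclude
  intro r hr
  obtain ⟨hr0, hr1⟩ := hr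
  rcases eq_or_lt_of_le hr0 with hr0' | hr0'
  · -- r = 0
    have hempty : {ω | Φ ((Y t ω - α * Y (t - 1) ω) / s) ≤ r} = ∅ := by
      ext ω
      simp only [Set.mem_setOf_eq, Set.mem_empty_iff_false, iff_false, not_le, ← hr0']
      exact hΦpos _
    rw [hempty, ← hr0']
    simp
  rcases eq_or_lt_of_le hr1 with hr1' | hr1'
  · -- r = 1
    have huniv : {ω | Φ ((Y t ω - α * Y (t - 1) ω) / s) ≤ r} = Set.univ := by
      ext ω
      simp only [Set.mem_setOf_eq, Set.mem_univ, iff_true, hr1']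
      exact hΦle1 _
    rw [huniv, hr1']
    simp
  -- 0 < r < 1
  obtain ⟨a, ha⟩ : ∃ a, Φ a < r := by
    have := hΦbot.eventually_lt_const hr0'
    exact this.exists
  obtain ⟨b, hb⟩ : ∃ b, r < Φ b := by
    have := hΦtop.eventually_const_lt hr1'
    exact this.exists
  have hab : a ≤ b := le_of_lt (hΦmono.lt_iff_lt.mp (lt_trans ha hb))
  obtain ⟨x₀, _, hx₀⟩ := intermediate_value_Icc hab hΦcont.continuousOn
    ⟨le_of_lt ha, le_of_lt hb⟩
  have hset : {ω | Φ ((Y t ω - α * Y (t - 1) ω) / s) ≤ r} = V ⁻¹' Set.Iic x₀ := by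
    ext ω
    simp only [Set.mem_setOf_eq, Set.mem_preimage, Set.mem_Iic, hV, hZ]
    rw [← hx₀]
    exact ⟨fun h => (hΦmono.le_iff_le).mp h, fun h => hΦmono.monotone h⟩
  rw [hset, ← Measure.map_apply hVmeas measurableSet_Iic, hmapV,
    ← ENNReal.ofReal_toReal (measure_ne_top (gaussianReal 0 1) (Set.Iic x₀))]
  congr 1
  rw [← hΦ, hx₀]
end

section
/- Suppose (U_t) is stationary and ergodic with values in [0,1], and define P₂(r₁,r₂) = P(U_t ≤ r₁, U_{t-1} ≤ r₂) and P̄₂(r) = P₂(r) − r₁r₂. If there exists r ∈ [0,1]² with P̄₂(r) ≠ 0, then the Kolmogorov–Smirnov statistic sup_{r∈[0,1]²} |V_{2n}(r)|, where V_{2n}(r) = (n−1)^{-1/2} Σ_{t=2}^n [1{U_t ≤ r₁}1{U_{t-1} ≤ r₂} − r₁r₂], diverges to +∞ in probability as n → ∞. -/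
open MeasureTheory Filter Set

set_option maxHeartbeats 1000000
set_option synthInstance.maxHeartbeats 400000

/-- Helper: von Neumann limit is a fixed point of the operator. -/
lemma exists_fixedPt_tendsto_birkhoffAverage {E : Type*} [NormedAddCommGroup E]
    [InnerProductSpace ℝ E] [CompleteSpace E] (f : E →L[ℝ] E) (hf : ‖f‖ ≤ 1) (x : E) :
    ∃ L : E, f L = L ∧ Tendsto (birkhoffAverage ℝ (⇑f) _root_.id · x) atTop (nhds L) := by
  refine ⟨_, ?_, f.tendsto_birkhoffAverage_orthogonalProjection hf x⟩
  have h := ((f.eqLocus (1 : E →L[ℝ] E)).orthogonalProjectionOnto x).2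
  rw [LinearMap.mem_eqLocus] at h
  simpa using h

/-- L² mean ergodic theorem, in-measure form, for a bounded measurable observable
of an ergodic measure-preserving transformation. -/
lemma aux_birkhoff_tendstoInMeasure {Ω : Type*} [MeasurableSpace Ω] (P : Measure Ω)
    [IsProbabilityMeasure P] {T : Ω → Ω} (hT : Ergodic T P) {g : Ω → ℝ}
    (hg : Measurable g) (hgb : ∀ ω, ‖g ω‖ ≤ 1) {ε : ℝ} (hε : 0 < ε) :
    Tendsto (fun m => P {ω | ε ≤ dist (birkhoffAverage ℝ T g m ω) (∫ ω, g ω ∂P)})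
      atTop (nhds 0) := by
  classical
  have hTm : Measurable T := hT.toMeasurePreserving.measurable
  have hmem : MemLp g 2 P := MemLp.of_bound hg.aestronglyMeasurable 1 (Eventually.of_forall hgb)
  set x : Lp ℝ 2 P := hmem.toLp g with hxdef
  set K : Lp ℝ 2 P →L[ℝ] Lp ℝ 2 P :=
    (Lp.compMeasurePreservingₗᵢ ℝ T hT.toMeasurePreserving).toContinuousLinearMap with hKdef
  have hKnorm : ‖K‖ ≤ 1 := LinearIsometry.norm_toContinuousLinearMap_le _
  have hKapp : ∀ y : Lp ℝ 2 P, ⇑(K y) =ᵐ[P] fun ω => y (T ω) := fun y =>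
    Lp.coeFn_compMeasurePreserving y hT.toMeasurePreserving
  obtain ⟨L, hKL, htendL⟩ := exists_fixedPt_tendsto_birkhoffAverage K hKnorm x
  -- the limit is a.e. constant by ergodicity
  have hKapp0 : ∀ y : Lp ℝ 2 P, K y = Lp.compMeasurePreserving T hT.toMeasurePreserving y :=
    fun _ => rfl
  obtain ⟨cst, hcst⟩ : ∃ c : ℝ, (L : Ω →ₘ[P] ℝ) = AEEqFun.const Ω c := by
    refine hT.eq_const_of_compMeasurePreserving_eq (g := (L : Ω →ₘ[P] ℝ)) ?_
    calc ((L : Ω →ₘ[P] ℝ)).compMeasurePreserving T hT.toMeasurePreserving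
        = ((Lp.compMeasurePreserving T hT.toMeasurePreserving L : Lp ℝ 2 P) : Ω →ₘ[P] ℝ) :=
          (Lp.compMeasurePreserving_val L hT.toMeasurePreserving).symm
      _ = ((K L : Lp ℝ 2 P) : Ω →ₘ[P] ℝ) := by rw [hKapp0]
      _ = (L : Ω →ₘ[P] ℝ) := by rw [hKL]
  have hLc : ⇑L =ᵐ[P] fun _ => cst := by
    have h0 : (⇑L : Ω → ℝ) = ⇑(L : Ω →ₘ[P] ℝ) := rfl
    rw [h0, hcst]
    exact AEEqFun.coeFn_const _ _
  -- identify the iterates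
  have hIter : ∀ i : ℕ, ⇑((⇑K)^[i] x) =ᵐ[P] fun ω => g (T^[i] ω) := by
    intro i
    induction i with
    | zero => simpa using hmem.coeFn_toLp
    | succ i ih =>
      rw [Function.iterate_succ_apply']
      refine (hKapp _).trans ?_
      have h2 := ih.comp_tendsto hT.toMeasurePreserving.quasiMeasurePreserving.tendsto_ae
      refine h2.trans ?_
      filter_upwards with ω
      show g (T^[i] (T ω)) = g (T^[i + 1] ω)
      rw [Function.iterate_succ_apply]
  have hsum : ∀ s : Finset ℕ,
      ⇑(∑ i ∈ s, (⇑K)^[i] x) =ᵐ[P] fun ω => ∑ i ∈ s, g (T^[i] ω) := by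
    intro s
    induction s using Finset.induction_on with
    | empty => simp only [Finset.sum_empty]; exact Lp.coeFn_zero (E := ℝ) (p := 2) (μ := P)
    | @insert a s ha ih =>
      rw [Finset.sum_insert ha]
      refine (Lp.coeFn_add _ _).trans ?_
      filter_upwards [hIter a, ih] with ω h1 h2
      rw [Pi.add_apply, h1, h2, Finset.sum_insert ha]
  have hBcoe : ∀ m : ℕ,
      ⇑(birkhoffAverage ℝ (⇑K) _root_.id m x) =ᵐ[P] birkhoffAverage ℝ T g m := by
    intro m
    have h0 : birkhoffAverage ℝ (⇑K) _root_.id m x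
        = (m : ℝ)⁻¹ • ∑ i ∈ Finset.range m, (⇑K)^[i] x := rfl
    rw [h0]
    refine (Lp.coeFn_smul _ _).trans ?_
    filter_upwards [hsum (Finset.range m)] with ω hω
    show (m : ℝ)⁻¹ • (⇑(∑ i ∈ Finset.range m, (⇑K)^[i] x)) ω = birkhoffAverage ℝ T g m ω
    rw [hω]
    rfl
  -- identify the constant via inner products with 1
  have honemem : MemLp (fun _ : Ω => (1 : ℝ)) 2 P := memLp_const 1
  set one : Lp ℝ 2 P := honemem.toLp _ with honedef
  have hinner : ∀ y : Lp ℝ 2 P, (inner ℝ y one : ℝ) = ∫ ω, y ω ∂P := by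
    intro y
    rw [L2.inner_def]
    refine integral_congr_ae ?_
    filter_upwards [honemem.coeFn_toLp] with ω hω
    rw [hω]
    simp [RCLike.inner_apply]
  have hint : Integrable g P := hmem.integrable one_le_two
  have hcomp : ∀ i : ℕ, ∫ ω, g (T^[i] ω) ∂P = ∫ ω, g ω ∂P := by
    intro i
    have hmp := hT.toMeasurePreserving.iterate i
    conv_rhs => rw [← hmp.map_eq]
    rw [integral_map hmp.aemeasurable (by rw [hmp.map_eq]; exact hg.aestronglyMeasurable)]
  have hBint : ∀ m : ℕ, 1 ≤ m → ∫ ω, birkhoffAverage ℝ T g m ω ∂P = ∫ ω, g ω ∂P := by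
    intro m hm
    have h0 : (fun ω => birkhoffAverage ℝ T g m ω)
        = fun ω => (m : ℝ)⁻¹ • ∑ i ∈ Finset.range m, g (T^[i] ω) := rfl
    have hInt : ∀ i : ℕ, Integrable (fun ω => g (T^[i] ω)) P := fun i =>
      (hmem.comp_measurePreserving (hT.toMeasurePreserving.iterate i)).integrable one_le_two
    rw [h0, integral_smul, integral_finset_sum _ (fun i _ => hInt i)]
    simp only [hcomp, Finset.sum_const, Finset.card_range, nsmul_eq_mul, smul_eq_mul]
    rw [← mul_assoc, inv_mul_cancel₀ (Nat.cast_ne_zero.mpr (by omega)), one_mul]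
  have hlim1 : Tendsto (fun m => (inner ℝ (birkhoffAverage ℝ (⇑K) _root_.id m x) one : ℝ))
      atTop (nhds (inner ℝ L one)) := htendL.inner tendsto_const_nhds
  have hev2 : (fun m => (inner ℝ (birkhoffAverage ℝ (⇑K) _root_.id m x) one : ℝ))
      =ᶠ[atTop] fun _ => ∫ ω, g ω ∂P := by
    filter_upwards [eventually_ge_atTop 1] with m hm
    rw [hinner, integral_congr_ae (hBcoe m), hBint m hm]
  have hLone : (inner ℝ L one : ℝ) = ∫ ω, g ω ∂P :=
    tendsto_nhds_unique (hlim1.congr' hev2) tendsto_const_nhds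
  have hcsteq : cst = ∫ ω, g ω ∂P := by
    rw [← hLone, hinner, integral_congr_ae hLc, integral_const]
    simp
  -- convergence of eLpNorms
  have hconc : Tendsto (fun m => eLpNorm (birkhoffAverage ℝ T g m - fun _ => cst) 2 P)
      atTop (nhds 0) := by
    have h1 := (Lp.tendsto_Lp_iff_tendsto_eLpNorm' _ _).mp htendL
    refine h1.congr fun m => ?_
    exact eLpNorm_congr_ae ((hBcoe m).sub hLc)
  have hBmeas : ∀ m : ℕ, Measurable (birkhoffAverage ℝ T g m) := by
    intro m
    have h0 : birkhoffAverage ℝ T g m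
        = fun ω => (m : ℝ)⁻¹ • ∑ i ∈ Finset.range m, g (T^[i] ω) := rfl
    rw [h0]
    have hs : Measurable fun ω => ∑ i ∈ Finset.range m, g (T^[i] ω) :=
      Finset.measurable_sum _ fun i _ => hg.comp (hTm.iterate i)
    exact measurable_const.mul hs
  have htim : TendstoInMeasure P (fun m => birkhoffAverage ℝ T g m) atTop (fun _ => cst) :=
    tendstoInMeasure_of_tendsto_eLpNorm (p := 2) (by norm_num)
      (fun m => (hBmeas m).aestronglyMeasurable) aestronglyMeasurable_const hconc
  rw [hcsteq] at htim
  exact tendstoInMeasure_iff_dist.mp htim ε hε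


/-- **Consistency of the KS test under a fixed alternative.** Let `(Uₜ)` be a stationary
ergodic `[0,1]`-valued process (modeled as `Uₜ = f ∘ Tᵗ` for an ergodic measure-preserving
shift `T`), let `P₂(r₁,r₂) = P(Uₜ ≤ r₁, U_{t-1} ≤ r₂)` and `P̄₂(r) = P₂(r) − r₁r₂`. If
`P̄₂(r) ≠ 0` for some `r ∈ [0,1]²`, then the Kolmogorov–Smirnov statistic
`sup_{r∈[0,1]²} |V₂ₙ(r)|`, with
`V₂ₙ(r) = (n−1)^{-1/2} ∑_{t=2}^n [1{Uₜ ≤ r₁}1{U_{t-1} ≤ r₂} − r₁r₂]`,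
diverges to `+∞` in probability as `n → ∞`. -/
theorem stmt_16 {Ω : Type*} [MeasurableSpace Ω] (P : Measure Ω) [IsProbabilityMeasure P]
    (T : Ω → Ω) (hT : Ergodic T P) (f : Ω → ℝ) (hf : Measurable f)
    (hfval : ∀ ω, f ω ∈ Set.Icc (0 : ℝ) 1)
    (U : ℕ → Ω → ℝ) (hU : ∀ t ω, U t ω = f (T^[t] ω))
    (V : ℕ → ℝ × ℝ → Ω → ℝ)
    (hV : ∀ n r ω, V n r ω = (1 / Real.sqrt ((n : ℝ) - 1)) *
      ∑ t ∈ Finset.Icc 2 n,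
        ((if U t ω ≤ r.1 then (1 : ℝ) else 0) * (if U (t - 1) ω ≤ r.2 then (1 : ℝ) else 0)
          - r.1 * r.2))
    (P₂ : ℝ × ℝ → ℝ)
    (hP₂ : ∀ r, P₂ r = (P {ω | f (T ω) ≤ r.1 ∧ f ω ≤ r.2}).toReal)
    (halt : ∃ r ∈ Set.Icc (0 : ℝ × ℝ) 1, P₂ r - r.1 * r.2 ≠ 0) :
    ∀ M : ℝ, Tendsto
      (fun n => P {ω | sSup {x : ℝ | ∃ r ∈ Set.Icc (0 : ℝ × ℝ) 1, x = |V n r ω|} ≤ M})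
      atTop (nhds 0) := by
  intro M
  classical
  obtain ⟨r₀, hr₀, hδ⟩ := halt
  have hr01 : (0 : ℝ) ≤ r₀.1 ∧ r₀.1 ≤ 1 := ⟨hr₀.1.1, hr₀.2.1⟩
  have hr02 : (0 : ℝ) ≤ r₀.2 ∧ r₀.2 ≤ 1 := ⟨hr₀.1.2, hr₀.2.2⟩
  have hTm : Measurable T := hT.toMeasurePreserving.measurable
  set A : Set Ω := {ω | f (T ω) ≤ r₀.1 ∧ f ω ≤ r₀.2} with hAdef
  have hA : MeasurableSet A :=
    (measurableSet_le (hf.comp hTm) measurable_const).inter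
      (measurableSet_le hf measurable_const)
  set g : Ω → ℝ := A.indicator fun _ => 1 with hgdef
  have hg : Measurable g := measurable_const.indicator hA
  have hgb : ∀ ω, ‖g ω‖ ≤ 1 := by
    intro ω
    by_cases h : ω ∈ A <;> simp [hgdef, Set.indicator_apply, h]
  have hgval : ∀ ω, g ω = if ω ∈ A then (1 : ℝ) else 0 := by
    intro ω; by_cases h : ω ∈ A <;> simp [hgdef, h]
  have hcA : ∫ ω, g ω ∂P = (P A).toReal := by
    rw [hgdef, integral_indicator_const (1 : ℝ) hA]
    simp [measureReal_def]
  set c : ℝ := ∫ ω, g ω ∂P with hcdef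
  set c₀ : ℝ := r₀.1 * r₀.2 with hc₀def
  have hcP : c = P₂ r₀ := hcA.trans (hP₂ r₀).symm
  have hcc₀ : |c - c₀| = |P₂ r₀ - c₀| := by rw [hcP]
  set ε : ℝ := |P₂ r₀ - c₀| / 2 with hεdef
  have hε : 0 < ε := half_pos (abs_pos.mpr hδ)
  -- the mean ergodic input
  have htim := aux_birkhoff_tendstoInMeasure P hT hg hgb hε
  have htim' : Tendsto
      (fun n : ℕ => P {ω | ε ≤ dist (birkhoffAverage ℝ T g (n - 1) ω) c}) atTop (nhds 0) :=
    htim.comp (tendsto_sub_atTop_nat 1)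
  have hBmeas : ∀ m : ℕ, Measurable (birkhoffAverage ℝ T g m) := by
    intro m
    have hs : Measurable fun ω => ∑ i ∈ Finset.range m, g (T^[i] ω) :=
      Finset.measurable_sum _ fun i _ => hg.comp (hTm.iterate i)
    exact measurable_const.mul hs
  have hpre : ∀ m : ℕ,
      P (T ⁻¹' {ω | ε ≤ dist (birkhoffAverage ℝ T g m ω) c})
        = P {ω | ε ≤ dist (birkhoffAverage ℝ T g m ω) c} := by
    intro m
    exact hT.toMeasurePreserving.measure_preimage
      ((measurableSet_le measurable_const ((hBmeas m).dist measurable_const)).nullMeasurableSet)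
  -- eventual bound
  obtain ⟨N, hN⟩ := exists_nat_ge ((M / ε) ^ 2 + 2)
  have hev : ∀ᶠ n : ℕ in atTop,
      P {ω | sSup {x : ℝ | ∃ r ∈ Set.Icc (0 : ℝ × ℝ) 1, x = |V n r ω|} ≤ M}
        ≤ P {ω | ε ≤ dist (birkhoffAverage ℝ T g (n - 1) ω) c} := by
    filter_upwards [eventually_ge_atTop (max 2 N)] with n hn
    have hn2 : 2 ≤ n := le_trans (le_max_left _ _) hn
    have hnN : (N : ℝ) ≤ n := Nat.cast_le.mpr (le_trans (le_max_right _ _) hn)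
    have hd1 : (1 : ℝ) ≤ (n : ℝ) - 1 := by
      have : (2 : ℝ) ≤ n := by exact_mod_cast hn2
      linarith
    have hdpos : 0 < Real.sqrt ((n : ℝ) - 1) := Real.sqrt_pos.mpr (by linarith)
    have hsq : M < Real.sqrt ((n : ℝ) - 1) * ε := by
      have h1 : (M / ε) ^ 2 < (n : ℝ) - 1 := by nlinarith
      have h2 : Real.sqrt ((M / ε) ^ 2) < Real.sqrt ((n : ℝ) - 1) :=
        Real.sqrt_lt_sqrt (sq_nonneg _) h1
      rw [Real.sqrt_sq_eq_abs] at h2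
      have h3 : M / ε < Real.sqrt ((n : ℝ) - 1) := lt_of_le_of_lt (le_abs_self _) h2
      calc M = M / ε * ε := by field_simp
        _ < Real.sqrt ((n : ℝ) - 1) * ε := by
            exact mul_lt_mul_of_pos_right h3 hε
    rw [← hpre (n - 1)]
    refine measure_mono ?_
    intro ω hω
    -- the natural number m = n - 1
    set m : ℕ := n - 1 with hmdef
    have hmcast : (m : ℝ) = (n : ℝ) - 1 := by
      rw [hmdef, Nat.cast_sub (by omega)]
      norm_num
    -- the value of V at r₀
    have hVr : V n r₀ ω = Real.sqrt ((n : ℝ) - 1) * (birkhoffAverage ℝ T g m (T ω) - c₀) := by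
      rw [hV]
      have hterm : ∀ t ∈ Finset.Icc 2 n,
          (if U t ω ≤ r₀.1 then (1 : ℝ) else 0) * (if U (t - 1) ω ≤ r₀.2 then (1 : ℝ) else 0)
            - r₀.1 * r₀.2 = g (T^[t - 1] ω) - c₀ := by
        intro t ht
        have ht2 : 2 ≤ t := (Finset.mem_Icc.mp ht).1
        have hts : (t - 1).succ = t := by omega
        have hTt : T (T^[t - 1] ω) = T^[t] ω := by
          have h := Function.iterate_succ_apply' T (t - 1) ω
          rw [hts] at h
          exact h.symm
        have hiff : (T^[t - 1] ω ∈ A) ↔ (f (T^[t] ω) ≤ r₀.1 ∧ f (T^[t - 1] ω) ≤ r₀.2) := by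
          rw [hAdef, Set.mem_setOf_eq, hTt]
        have hgt : g (T^[t - 1] ω)
            = if f (T^[t] ω) ≤ r₀.1 ∧ f (T^[t - 1] ω) ≤ r₀.2 then (1 : ℝ) else 0 := by
          rw [hgval]
          exact if_congr hiff rfl rfl
        rw [hgt, hU, hU, hc₀def]
        by_cases h1 : f (T^[t] ω) ≤ r₀.1 <;> by_cases h2 : f (T^[t - 1] ω) ≤ r₀.2 <;>
          simp [h1, h2]
      rw [Finset.sum_congr rfl hterm]
      have hIcc : Finset.Icc 2 n = Finset.Ico 2 (n + 1) := by rw [Finset.Ico_add_one_right_eq_Icc]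
      rw [hIcc, Finset.sum_Ico_eq_sum_range]
      have hn1 : n + 1 - 2 = m := by omega
      rw [hn1]
      have hidx : ∀ i, 2 + i - 1 = i + 1 := fun i => by omega
      simp only [hidx]
      rw [Finset.sum_sub_distrib, Finset.sum_const, Finset.card_range]
      have hshift : ∑ i ∈ Finset.range m, g (T^[i + 1] ω) = birkhoffSum T g m (T ω) := by
        refine Finset.sum_congr rfl fun i _ => ?_
        rw [Function.iterate_succ_apply]
      rw [hshift]
      have hBS : birkhoffSum T g m (T ω) = (m : ℝ) * birkhoffAverage ℝ T g m (T ω) := by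
        have hb : birkhoffAverage ℝ T g m (T ω)
            = (m : ℝ)⁻¹ * birkhoffSum T g m (T ω) := rfl
        rw [hb, ← mul_assoc, mul_inv_cancel₀ (by rw [hmcast]; linarith), one_mul]
      rw [hBS, nsmul_eq_mul, hmcast]
      have h9 : (1 : ℝ) / Real.sqrt ((n : ℝ) - 1) *
          (((n : ℝ) - 1) * birkhoffAverage ℝ T g m (T ω) - ((n : ℝ) - 1) * c₀)
          = (((n : ℝ) - 1) / Real.sqrt ((n : ℝ) - 1))
            * (birkhoffAverage ℝ T g m (T ω) - c₀) := by ring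
      rw [h9, Real.div_sqrt]
    -- bound the sup below by |V n r₀ ω|
    have hbddS : BddAbove {x : ℝ | ∃ r ∈ Set.Icc (0 : ℝ × ℝ) 1, x = |V n r ω|} := by
      refine ⟨Real.sqrt ((n : ℝ) - 1), ?_⟩
      rintro x ⟨r, hr, rfl⟩
      have hterm1 : ∀ t ∈ Finset.Icc 2 n,
          |(if U t ω ≤ r.1 then (1 : ℝ) else 0) * (if U (t - 1) ω ≤ r.2 then (1 : ℝ) else 0)
            - r.1 * r.2| ≤ 1 := by
        intro t _
        have h1 : (0 : ℝ) ≤ r.1 * r.2 := mul_nonneg hr.1.1 hr.1.2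
        have h2 : r.1 * r.2 ≤ 1 := mul_le_one₀ hr.2.1 hr.1.2 hr.2.2
        have h3 : (0 : ℝ) ≤ (if U t ω ≤ r.1 then (1 : ℝ) else 0)
            * (if U (t - 1) ω ≤ r.2 then (1 : ℝ) else 0) := by positivity
        have h4 : (if U t ω ≤ r.1 then (1 : ℝ) else 0)
            * (if U (t - 1) ω ≤ r.2 then (1 : ℝ) else 0) ≤ 1 := by
          by_cases hh1 : U t ω ≤ r.1 <;> by_cases hh2 : U (t - 1) ω ≤ r.2 <;>
            simp [hh1, hh2]
        rw [abs_le]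
        constructor <;> linarith
      rw [hV, abs_mul]
      have h5 : |(1 : ℝ) / Real.sqrt ((n : ℝ) - 1)| = 1 / Real.sqrt ((n : ℝ) - 1) :=
        abs_of_nonneg (by positivity)
      rw [h5]
      have h6 : |∑ t ∈ Finset.Icc 2 n,
          ((if U t ω ≤ r.1 then (1 : ℝ) else 0) * (if U (t - 1) ω ≤ r.2 then (1 : ℝ) else 0)
            - r.1 * r.2)| ≤ ((n : ℝ) - 1) := by
        refine le_trans (Finset.abs_sum_le_sum_abs _ _) ?_
        refine le_trans (Finset.sum_le_card_nsmul _ _ 1 hterm1) ?_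
        rw [Nat.card_Icc, nsmul_eq_mul, mul_one]
        rw [show n + 1 - 2 = n - 1 from by omega, Nat.cast_sub (by omega)]
        norm_num
      calc 1 / Real.sqrt ((n : ℝ) - 1) * |∑ t ∈ Finset.Icc 2 n,
            ((if U t ω ≤ r.1 then (1 : ℝ) else 0) * (if U (t - 1) ω ≤ r.2 then (1 : ℝ) else 0)
              - r.1 * r.2)|
          ≤ 1 / Real.sqrt ((n : ℝ) - 1) * ((n : ℝ) - 1) := by
            exact mul_le_mul_of_nonneg_left h6 (by positivity)
        _ = ((n : ℝ) - 1) / Real.sqrt ((n : ℝ) - 1) := by ring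
        _ = Real.sqrt ((n : ℝ) - 1) := Real.div_sqrt
    have hmemS : |V n r₀ ω| ∈ {x : ℝ | ∃ r ∈ Set.Icc (0 : ℝ × ℝ) 1, x = |V n r ω|} :=
      ⟨r₀, hr₀, rfl⟩
    have h1 : |V n r₀ ω| ≤ M := le_trans (le_csSup hbddS hmemS) hω
    rw [hVr, abs_mul, abs_of_nonneg (Real.sqrt_nonneg _)] at h1
    have h2 : |birkhoffAverage ℝ T g m (T ω) - c₀| < ε := by
      by_contra hcon
      push_neg at hcon
      have := mul_le_mul_of_nonneg_left hcon hdpos.le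
      nlinarith
    show ε ≤ dist (birkhoffAverage ℝ T g m (T ω)) c
    rw [Real.dist_eq]
    have htri : |c - c₀| ≤ |c - birkhoffAverage ℝ T g m (T ω)|
        + |birkhoffAverage ℝ T g m (T ω) - c₀| := abs_sub_le _ _ _
    have habs2 : |c - c₀| = 2 * ε := by rw [hcc₀, hεdef]; ring
    have hcomm : |birkhoffAverage ℝ T g m (T ω) - c| = |c - birkhoffAverage ℝ T g m (T ω)| :=
      abs_sub_comm _ _
    rw [hcomm]
    linarith
  exact tendsto_of_tendsto_of_tendsto_of_le_of_le' tendsto_const_nhds htim'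
    (Eventually.of_forall fun n => zero_le) hev
end
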